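/- arXiv:2512.13058 — 10 statements merged into one kernel-verified Lean document; each statement's English description precedes it below -/
import Mathlib

section
/- Let n ∈ ℕ and let A, B be n×n matrices over ℚ. Then trace(A^k) = trace(B^k) for all k with 1 ≤ k ≤ n if and only if A and B have the same characteristic polynomial. -/
open Polynomial Matrix Finset

namespace TraceCP


variable {R : Type*} [CommRing R] {m : ℕ}

lemma pow_props (T : Matrix (Fin (m+1)) (Fin (m+1)) R)
    (hT : ∀ i, i ≠ 0 → T i 0 = 0) (k : ℕ) :
    (∀ i, i ≠ 0 → (T ^ k) i 0 = 0) ∧ ((T ^ k) 0 0 = (T 0 0) ^ k) ∧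
      ((T ^ k).submatrix Fin.succ Fin.succ = (T.submatrix Fin.succ Fin.succ) ^ k) := by
  induction k with
  | zero =>
    refine ⟨fun i hi => Matrix.one_apply_ne hi, by simp, ?_⟩
    simp [pow_zero, Matrix.submatrix_one _ (Fin.succ_injective m)]
  | succ k ih =>
    obtain ⟨ih1, ih2, ih3⟩ := ih
    have hmul : T ^ (k+1) = T ^ k * T := pow_succ T k
    refine ⟨?_, ?_, ?_⟩
    · intro i hi
      rw [hmul, Matrix.mul_apply, Fin.sum_univ_succ]
      simp only [hT _ (Fin.succ_ne_zero _), mul_zero, Finset.sum_const_zero, add_zero]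
      rw [ih1 i hi, zero_mul]
    · rw [hmul, Matrix.mul_apply, Fin.sum_univ_succ]
      simp only [hT _ (Fin.succ_ne_zero _), mul_zero, Finset.sum_const_zero, add_zero]
      rw [ih2, pow_succ]
    · ext i j
      rw [hmul, Matrix.submatrix_apply, Matrix.mul_apply, Fin.sum_univ_succ,
        ih1 _ (Fin.succ_ne_zero _), zero_mul, zero_add, pow_succ, Matrix.mul_apply]
      exact Finset.sum_congr rfl fun x _ => by
        rw [← ih3]; rfl

lemma charmatrix_submatrix_succ (T : Matrix (Fin (m+1)) (Fin (m+1)) R) :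
    (charmatrix T).submatrix Fin.succ Fin.succ
      = charmatrix (T.submatrix Fin.succ Fin.succ) := by
  ext i j
  by_cases h : i = j
  · subst h; simp [charmatrix_apply_eq]
  · rw [Matrix.submatrix_apply, charmatrix_apply_ne _ _ _ (fun hc => h (Fin.succ_injective m hc)),
      charmatrix_apply_ne _ _ _ h, Matrix.submatrix_apply]

lemma charpoly_firstCol (T : Matrix (Fin (m+1)) (Fin (m+1)) R)
    (hT : ∀ i, i ≠ 0 → T i 0 = 0) :
    T.charpoly = (X - C (T 0 0)) * (T.submatrix Fin.succ Fin.succ).charpoly := by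
  unfold Matrix.charpoly
  rw [Matrix.det_succ_column_zero]
  rw [Finset.sum_eq_single 0]
  · rw [Fin.succAbove_zero, charmatrix_submatrix_succ, charmatrix_apply_eq]
    simp
  · intro i _ hi
    rw [charmatrix_apply_ne _ _ _ hi, hT i hi]
    simp
  · intro h; exact absurd (Finset.mem_univ 0) h

variable {F : Type*} [Field F] [IsAlgClosed F]

omit [IsAlgClosed F] in
lemma toMatrix_pow {ι V : Type*} [Fintype ι] [DecidableEq ι]
    [AddCommGroup V] [Module F V] (b : Module.Basis ι F V) (f : V →ₗ[F] V) (k : ℕ) :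
    LinearMap.toMatrix b b (f ^ k) = (LinearMap.toMatrix b b f) ^ k := by
  induction k with
  | zero => rw [pow_zero, pow_zero]; exact LinearMap.toMatrix_one b
  | succ k ih =>
    rw [pow_succ, pow_succ, ← ih, Module.End.mul_eq_comp, LinearMap.toMatrix_comp b b b]

lemma exists_eigenvector (M : Matrix (Fin (m+1)) (Fin (m+1)) F) :
    ∃ (μ : F) (v : Fin (m+1) → F), v ≠ 0 ∧ M.mulVec v = μ • v := by
  have hdeg : M.charpoly.degree ≠ 0 := by
    rw [Matrix.charpoly_degree_eq_dim, Fintype.card_fin]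
    exact_mod_cast Nat.succ_ne_zero m
  obtain ⟨μ, hμ⟩ := IsAlgClosed.exists_root M.charpoly hdeg
  have hmap : (evalRingHom μ).mapMatrix (charmatrix M)
      = μ • (1 : Matrix (Fin (m+1)) (Fin (m+1)) F) - M := by
    ext i j
    by_cases h : i = j
    · subst h
      simp [RingHom.mapMatrix_apply, charmatrix_apply_eq, Matrix.one_apply_eq]
    · simp [RingHom.mapMatrix_apply, charmatrix_apply_ne _ _ _ h, Matrix.one_apply_ne h]
  have hdet : (μ • (1 : Matrix (Fin (m+1)) (Fin (m+1)) F) - M).det = 0 := by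
    rw [← hmap, ← RingHom.map_det]
    simpa [Matrix.charpoly] using hμ
  obtain ⟨v, hv0, hveq⟩ := (Matrix.exists_mulVec_eq_zero_iff).2 hdet
  refine ⟨μ, v, hv0, ?_⟩
  rw [Matrix.sub_mulVec, sub_eq_zero] at hveq
  rw [← hveq, Matrix.smul_mulVec, Matrix.one_mulVec]

theorem exists_eigs : ∀ (m : ℕ) (M : Matrix (Fin m) (Fin m) F),
    ∃ d : Fin m → F, M.charpoly = ∏ i, (X - C (d i)) ∧
      ∀ k : ℕ, (M ^ k).trace = ∑ i, d i ^ k := by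
  intro m
  induction m with
  | zero =>
    intro M
    refine ⟨![], ?_, fun k => ?_⟩
    · simp [Matrix.charpoly, Matrix.det_fin_zero]
    · simp [Matrix.trace]
  | succ m IH =>
    intro M
    obtain ⟨μ, v, hv0, hMv⟩ := exists_eigenvector M
    have hli : LinearIndepOn F id ({v} : Set (Fin (m+1) → F)) :=
      LinearIndepOn.singleton hv0
    let b₀ := Module.Basis.extend hli
    haveI : Fintype (hli.extend (Set.subset_univ ({v} : Set (Fin (m+1) → F)))) :=
      FiniteDimensional.fintypeBasisIndex b₀
    have hcard : Fintype.card (hli.extend (Set.subset_univ ({v} : Set (Fin (m+1) → F)))) = m + 1 := by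
      rw [← Module.finrank_eq_card_basis b₀]
      simp
    have hvmem : v ∈ hli.extend (Set.subset_univ ({v} : Set (Fin (m+1) → F))) :=
      hli.subset_extend _ rfl
    let iv : hli.extend (Set.subset_univ ({v} : Set (Fin (m+1) → F))) := ⟨v, hvmem⟩
    let e₁ := Fintype.equivFinOfCardEq hcard
    let e := e₁.trans (Equiv.swap (e₁ iv) 0)
    let b := b₀.reindex e
    have hb0 : b 0 = v := by
      have hsymm : e.symm 0 = iv := by
        show e₁.symm ((Equiv.swap (e₁ iv) 0).symm 0) = iv
        rw [Equiv.symm_swap, Equiv.swap_apply_right, Equiv.symm_apply_apply]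
      rw [show b 0 = b₀ (e.symm 0) from Module.Basis.reindex_apply b₀ e 0, hsymm]
      exact Module.Basis.extend_apply_self hli iv
    let f := Matrix.toLin' M
    have hfM : LinearMap.toMatrix (Pi.basisFun F (Fin (m+1))) (Pi.basisFun F (Fin (m+1))) f = M := by
      rw [LinearMap.toMatrix_eq_toMatrix']
      exact LinearMap.toMatrix'_toLin' M
    set T := LinearMap.toMatrix b b f with hTdef
    have hfb0 : f (b 0) = μ • b 0 := by
      rw [hb0]
      show Matrix.toLin' M v = μ • v
      rw [Matrix.toLin'_apply, hMv]
    have hTcol : ∀ i, T i 0 = μ * (Finsupp.single (0 : Fin (m+1)) (1:F)) i := by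
      intro i
      rw [hTdef, LinearMap.toMatrix_apply, hfb0, _root_.map_smul, Module.Basis.repr_self]
      by_cases h : (0 : Fin (m+1)) = i <;> simp [Finsupp.single_apply, h]
    have hcol : ∀ i, i ≠ 0 → T i 0 = 0 := by
      intro i hi
      rw [hTcol i, Finsupp.single_eq_of_ne hi, mul_zero]
    have hT00 : T 0 0 = μ := by
      rw [hTcol 0, Finsupp.single_eq_same, mul_one]
    have hcp : M.charpoly = T.charpoly := by
      rw [hTdef, LinearMap.charpoly_toMatrix, ← hfM, LinearMap.charpoly_toMatrix]
    have htr : ∀ k : ℕ, (M ^ k).trace = (T ^ k).trace := by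
      intro k
      rw [← hfM, ← toMatrix_pow, hTdef, ← toMatrix_pow,
        ← LinearMap.trace_eq_matrix_trace F (Pi.basisFun F (Fin (m+1))),
        ← LinearMap.trace_eq_matrix_trace F b]
    set N := T.submatrix Fin.succ Fin.succ with hN
    obtain ⟨d', hd1, hd2⟩ := IH N
    refine ⟨Fin.cons μ d', ?_, fun k => ?_⟩
    · rw [hcp, charpoly_firstCol T hcol, hT00, hd1, Fin.prod_univ_succ]
      simp [Fin.cons_zero, Fin.cons_succ]
    · obtain ⟨h1, h2, h3⟩ := pow_props T hcol k
      rw [htr k, ← trace_submatrix_succ, h2, h3, hT00, ← hN, hd2 k, Fin.sum_univ_succ]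
      simp [Fin.cons_zero, Fin.cons_succ]



lemma psum_aeval {n : ℕ} {F : Type*} [CommRing F] (d : Fin n → F) (j : ℕ) :
    MvPolynomial.aeval d (MvPolynomial.psum (Fin n) F j) = ∑ i, d i ^ j := by
  simp [MvPolynomial.psum]

lemma esymm_eq_of_psum_eq {n : ℕ} {F : Type*} [Field F] [CharZero F] (d e : Fin n → F)
    (h : ∀ j, 1 ≤ j → j ≤ n → ∑ i, d i ^ j = ∑ i, e i ^ j) :
    ∀ k, k ≤ n → (Finset.univ.val.map d).esymm k = (Finset.univ.val.map e).esymm k := by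
  intro k
  induction k using Nat.strong_induction_on with
  | _ k IH =>
    intro hk
    rcases Nat.eq_zero_or_pos k with h0 | h1
    · subst h0; simp [Multiset.esymm]
    · have hd := congrArg (MvPolynomial.aeval d) (MvPolynomial.mul_esymm_eq_sum (Fin n) F k)
      have he := congrArg (MvPolynomial.aeval e) (MvPolynomial.mul_esymm_eq_sum (Fin n) F k)
      simp only [_root_.map_mul, map_natCast, _root_.map_pow, map_neg, _root_.map_one, map_sum,
        MvPolynomial.aeval_esymm_eq_multiset_esymm, psum_aeval] at hd he
      have hsum : ∑ a ∈ (antidiagonal k).filter (fun a => a.1 < k),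
            (-1 : F) ^ a.1 * (Finset.univ.val.map d).esymm a.1 * ∑ i, d i ^ a.2
          = ∑ a ∈ (antidiagonal k).filter (fun a => a.1 < k),
            (-1 : F) ^ a.1 * (Finset.univ.val.map e).esymm a.1 * ∑ i, e i ^ a.2 := by
        refine Finset.sum_congr rfl fun a ha => ?_
        rw [Finset.mem_filter, Finset.HasAntidiagonal.mem_antidiagonal] at ha
        have ha2pos : 1 ≤ a.2 := by
          by_contra hc
          push_neg at hc
          interval_cases h' : a.2
          · omega
        have ha2le : a.2 ≤ n := by omega
        have ha1le : a.1 ≤ n := by omega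
        rw [IH a.1 ha.2 ha1le, h a.2 ha2pos ha2le]
      rw [hsum, ← he] at hd
      exact mul_left_cancel₀ (Nat.cast_ne_zero.2 h1.ne') hd

end TraceCP


/-- For `n × n` matrices `A, B` over `ℚ`, the traces of `A ^ k` and
`B ^ k` agree for all `1 ≤ k ≤ n` iff `A` and `B` have the same characteristic
polynomial. -/
theorem traces_eq_up_to_n_iff_charpoly_eq
    {n : ℕ} (A B : Matrix (Fin n) (Fin n) ℚ) :
    (∀ k : ℕ, 1 ≤ k → k ≤ n → (A ^ k).trace = (B ^ k).trace) ↔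
      A.charpoly = B.charpoly := by
  classical
  let F := AlgebraicClosure ℚ
  let φ : ℚ →+* F := algebraMap ℚ F
  have hφ : Function.Injective φ := φ.injective
  haveI : CharZero F := charZero_of_injective_algebraMap hφ
  obtain ⟨d, hd1, hd2⟩ := TraceCP.exists_eigs n (A.map φ)
  obtain ⟨e, he1, he2⟩ := TraceCP.exists_eigs n (B.map φ)
  have htr : ∀ (M : Matrix (Fin n) (Fin n) ℚ) (k : ℕ),
      ((M.map φ) ^ k).trace = φ ((M ^ k).trace) := by
    intro M k
    rw [show M.map φ = φ.mapMatrix M from rfl, ← map_pow]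
    simp [Matrix.trace, RingHom.mapMatrix_apply, Matrix.map_apply, map_sum]
  have hmd : ∀ (g : Fin n → F), (∏ i, (X - C (g i)))
      = ((Finset.univ.val.map g).map (fun t => X - C t)).prod := by
    intro g
    rw [Finset.prod_eq_multiset_prod, Multiset.map_map]
    rfl
  have hcardd : ∀ (g : Fin n → F), Multiset.card (Finset.univ.val.map g) = n := by
    intro g; simp
  constructor
  · intro h
    have hps : ∀ j, 1 ≤ j → j ≤ n → ∑ i, d i ^ j = ∑ i, e i ^ j := by
      intro j h1 h2
      calc ∑ i, d i ^ j = ((A.map φ) ^ j).trace := (hd2 j).symm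
        _ = φ ((A ^ j).trace) := htr A j
        _ = φ ((B ^ j).trace) := by rw [h j h1 h2]
        _ = ((B.map φ) ^ j).trace := (htr B j).symm
        _ = ∑ i, e i ^ j := he2 j
    have hesymm := TraceCP.esymm_eq_of_psum_eq d e hps
    have hprod : (∏ i, (X - C (d i))) = ∏ i, (X - C (e i)) := by
      rw [hmd d, hmd e, Multiset.prod_X_sub_X_eq_sum_esymm, Multiset.prod_X_sub_X_eq_sum_esymm,
        hcardd d, hcardd e]
      refine Finset.sum_congr rfl fun j hj => ?_
      rw [Finset.mem_range] at hj
      rw [hesymm j (Nat.lt_succ_iff.mp hj)]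
    have hmapeq : A.charpoly.map φ = B.charpoly.map φ := by
      rw [← Matrix.charpoly_map, ← Matrix.charpoly_map, hd1, he1, hprod]
    exact Polynomial.map_injective φ hφ hmapeq
  · intro h k hk1 hk2
    have hmapeq : (∏ i, (X - C (d i))) = ∏ i, (X - C (e i)) := by
      rw [← hd1, ← he1, Matrix.charpoly_map, Matrix.charpoly_map, h]
    have hms : Finset.univ.val.map d = Finset.univ.val.map e := by
      calc Finset.univ.val.map d
          = ((Finset.univ.val.map d).map (fun t => X - C t)).prod.roots :=
            (Polynomial.roots_multiset_prod_X_sub_C _).symm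
        _ = ((Finset.univ.val.map e).map (fun t => X - C t)).prod.roots := by
            rw [← hmd d, ← hmd e, hmapeq]
        _ = Finset.univ.val.map e := Polynomial.roots_multiset_prod_X_sub_C _
    have hsum : ∑ i, d i ^ k = ∑ i, e i ^ k := by
      have h1 : ∀ (g : Fin n → F), ∑ i, g i ^ k = ((Finset.univ.val.map g).map (fun t => t ^ k)).sum := by
        intro g
        rw [Finset.sum_eq_multiset_sum, Multiset.map_map]
        rfl
      rw [h1 d, h1 e, hms]
    apply hφ
    rw [← htr A k, ← htr B k, hd2 k, he2 k, hsum]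
end

section
/- Let A be an n×n matrix over ℚ and B an m×m matrix over ℚ. Then trace(A^k) = trace(B^k) for all k ≥ 1 if and only if trace(A^k) = trace(B^k) for all k with 1 ≤ k ≤ max(n,m). -/
open Polynomial Matrix


lemma eval_charpoly' {ι : Type*} [Fintype ι] [DecidableEq ι]
    (M : Matrix ι ι ℂ) (x : ℂ) :
    M.charpoly.eval x = (x • (1 : Matrix ι ι ℂ) - M).det := by
  rw [Matrix.charpoly, eval_det, matPolyEquiv_charmatrix]
  congr 1
  simp [Matrix.scalar, smul_one_eq_diagonal]

lemma charpoly_pow_eq {ι : Type*} [Fintype ι] [DecidableEq ι]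
    (M : Matrix ι ι ℂ) (k : ℕ) (hk : 1 ≤ k) :
    (M ^ k).charpoly = ((M.charpoly.roots.map (· ^ k)).map (fun a => X - C a)).prod := by
  have hsp : M.charpoly.Splits := IsAlgClosed.splits _
  have hM : M.charpoly = (M.charpoly.roots.map fun a => X - C a).prod :=
    hsp.eq_prod_roots_of_monic M.charpoly_monic
  have hcard : Multiset.card M.charpoly.roots = Fintype.card ι := by
    rw [splits_iff_card_roots.mp hsp, Matrix.charpoly_natDegree_eq_dim]
  apply Polynomial.funext
  intro x
  let φ : ℂ[X] →* ℂ :=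
    Matrix.detMonoidHom.comp (aeval M : ℂ[X] →ₐ[ℂ] Matrix ι ι ℂ).toRingHom.toMonoidHom
  have hφ : ∀ p : ℂ[X], φ p = (aeval M p).det := fun p => rfl
  set g : ℂ[X] := X ^ k - C x with hg
  have hgm : g.Monic := monic_X_pow_sub_C x (by omega)
  have hgsp : g.Splits := IsAlgClosed.splits _
  have hgdeg : g.natDegree = k := by
    rw [hg, natDegree_X_pow_sub_C]
  have hgcard : Multiset.card g.roots = k := by rw [splits_iff_card_roots.mp hgsp, hgdeg]
  have hgprod : g = (g.roots.map fun a => X - C a).prod :=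
    hgsp.eq_prod_roots_of_monic hgm
  have haev : aeval M g = M ^ k - x • 1 := by
    simp [hg, Algebra.algebraMap_eq_smul_one]
  have h1 : (M ^ k - x • (1 : Matrix ι ι ℂ)).det
      = (g.roots.map fun r => (M - r • (1 : Matrix ι ι ℂ)).det).prod := by
    rw [← haev, ← hφ]
    conv_lhs => rw [hgprod]
    rw [map_multiset_prod, Multiset.map_map]
    congr 1
    apply Multiset.map_congr rfl
    intro r _
    simp only [Function.comp_apply, hφ, map_sub, aeval_X, aeval_C,
      Algebra.algebraMap_eq_smul_one]
  have h2 : ∀ r : ℂ, (M - r • (1 : Matrix ι ι ℂ)).det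
      = (-1 : ℂ) ^ Fintype.card ι * (M.charpoly.roots.map fun μ => r - μ).prod := by
    intro r
    rw [← neg_sub (r • (1 : Matrix ι ι ℂ)) M, Matrix.det_neg, ← eval_charpoly']
    congr 1
    conv_lhs => rw [hM]
    rw [eval_multiset_prod, Multiset.map_map]
    simp
  have h3 : ∀ μ : ℂ, (g.roots.map fun r => r - μ).prod = (-1 : ℂ) ^ k * (μ ^ k - x) := by
    intro μ
    have e1 : (g.roots.map fun r => r - μ).prod
        = ((g.roots.map fun r => μ - r).map fun y => -y).prod := by
      rw [Multiset.map_map]; congr 1; apply Multiset.map_congr rfl; intros; simp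
    have e2 : (g.roots.map fun r => μ - r).prod = g.eval μ := by
      conv_rhs => rw [hgprod]
      rw [eval_multiset_prod, Multiset.map_map]
      simp
    rw [e1, Multiset.prod_map_neg, Multiset.card_map, hgcard, e2]
    simp [hg]
  have hdet : (M ^ k - x • (1 : Matrix ι ι ℂ)).det
      = (M.charpoly.roots.map fun μ => μ ^ k - x).prod := by
    rw [h1]
    have e4 : (g.roots.map fun r => (M - r • (1 : Matrix ι ι ℂ)).det).prod
        = (g.roots.map fun r =>
            (-1 : ℂ) ^ Fintype.card ι * (M.charpoly.roots.map fun μ => r - μ).prod).prod := by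
      congr 1; exact Multiset.map_congr rfl fun r _ => h2 r
    rw [e4, Multiset.prod_map_mul, Multiset.map_const', Multiset.prod_replicate, hgcard,
      Multiset.prod_map_prod_map]
    have e5 : (M.charpoly.roots.map fun μ => (g.roots.map fun r => r - μ).prod).prod
        = (M.charpoly.roots.map fun μ => (-1 : ℂ) ^ k * (μ ^ k - x)).prod := by
      congr 1; exact Multiset.map_congr rfl fun μ _ => h3 μ
    rw [e5, Multiset.prod_map_mul, Multiset.map_const', Multiset.prod_replicate, hcard,
      ← mul_assoc, ← pow_mul, ← pow_mul, mul_comm (Fintype.card ι) k, ← pow_add]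
    have : Even (k * Fintype.card ι + k * Fintype.card ι) := ⟨k * Fintype.card ι, rfl⟩
    rw [this.neg_one_pow, one_mul]
  have e8 : ((M.charpoly.roots.map (· ^ k)).map (fun a => X - C a)).prod.eval x
      = (-1 : ℂ) ^ Fintype.card ι * (M.charpoly.roots.map fun μ => μ ^ k - x).prod := by
    rw [eval_multiset_prod, Multiset.map_map, Multiset.map_map]
    have e7 : (M.charpoly.roots.map ((eval x ∘ fun a => X - C a) ∘ fun μ => μ ^ k)).prod
        = (M.charpoly.roots.map fun μ => x - μ ^ k).prod := by
      congr 1; exact Multiset.map_congr rfl fun μ _ => by simp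
    have e6 : (M.charpoly.roots.map fun μ => x - μ ^ k).prod
        = ((M.charpoly.roots.map fun μ => μ ^ k - x).map fun y => -y).prod := by
      rw [Multiset.map_map]; congr 1; exact Multiset.map_congr rfl fun μ _ => by simp
    rw [e7, e6, Multiset.prod_map_neg, Multiset.card_map, hcard]
  rw [eval_charpoly', ← neg_sub (M ^ k) (x • (1 : Matrix ι ι ℂ)), Matrix.det_neg, hdet, e8]

lemma trace_pow_eq_sum_pow_roots {ι : Type*} [Fintype ι] [DecidableEq ι]
    (M : Matrix ι ι ℂ) (k : ℕ) (hk : 1 ≤ k) :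
    (M ^ k).trace = (M.charpoly.roots.map (· ^ k)).sum := by
  rw [Matrix.trace_eq_sum_roots_charpoly, charpoly_pow_eq M k hk,
    Polynomial.roots_multiset_prod_X_sub_C]


/-- Newton's identity for a multiset of complex numbers. -/
lemma multiset_newton (s : Multiset ℂ) (k : ℕ) :
    (k : ℂ) * s.esymm k = (-1) ^ (k + 1) *
      ∑ a ∈ Finset.HasAntidiagonal.antidiagonal k with a.1 < k,
        (-1 : ℂ) ^ a.1 * s.esymm a.1 * (s.map (· ^ a.2)).sum := by
  classical
  obtain ⟨l, hl⟩ : ∃ l : List ℂ, (l : Multiset ℂ) = s := ⟨s.toList, s.coe_toList⟩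
  let x : Fin l.length → ℂ := l.get
  have hx : (Finset.univ.val.map x) = s := by
    rw [Fin.univ_val_map]
    rw [← hl]
    exact congrArg _ (List.ofFn_get l)
  have key := congrArg (MvPolynomial.eval x) (MvPolynomial.mul_esymm_eq_sum (Fin l.length) ℂ k)
  simp only [_root_.map_mul, map_sum, _root_.map_pow, map_natCast, map_neg, _root_.map_one] at key
  have hesymm : ∀ j, MvPolynomial.eval x (MvPolynomial.esymm (Fin l.length) ℂ j) = s.esymm j := by
    intro j
    have := MvPolynomial.aeval_esymm_eq_multiset_esymm (Fin l.length) ℂ (S := ℂ) j x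
    rw [MvPolynomial.aeval_def, ← MvPolynomial.eval_map] at this
    simpa [hx, MvPolynomial.eval_map, MvPolynomial.map_id] using this
  have hpsum : ∀ j, MvPolynomial.eval x (MvPolynomial.psum (Fin l.length) ℂ j) = (s.map (· ^ j)).sum := by
    intro j
    rw [MvPolynomial.psum]
    simp only [map_sum, map_pow, MvPolynomial.eval_X]
    rw [← hx, Multiset.map_map]
    rw [Finset.sum]
    simp [Multiset.map_map]
  simp only [hesymm, hpsum] at key
  convert key using 2

lemma psum_ext (s t : Multiset ℂ) (hcard : Multiset.card s = Multiset.card t)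
    (h : ∀ k, 1 ≤ k → k ≤ Multiset.card s → (s.map (· ^ k)).sum = (t.map (· ^ k)).sum) :
    ∀ k, 1 ≤ k → (s.map (· ^ k)).sum = (t.map (· ^ k)).sum := by
  classical
  have he : ∀ k, s.esymm k = t.esymm k := by
    intro k
    induction k using Nat.strong_induction_on with
    | _ k ih =>
      rcases Nat.eq_zero_or_pos k with h0 | h0
      · subst h0; simp [Multiset.esymm]
      rcases le_or_gt k (Multiset.card s) with hkN | hkN
      · have h1 := multiset_newton s k
        have h2 := multiset_newton t k
        have hmul : (k : ℂ) * s.esymm k = (k : ℂ) * t.esymm k := by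
          rw [h1, h2]
          congr 1
          apply Finset.sum_congr rfl
          intro a ha
          simp only [Finset.mem_filter, Finset.HasAntidiagonal.mem_antidiagonal] at ha
          rw [ih a.1 (by omega), h a.2 (by omega) (by omega)]
        exact mul_left_cancel₀ (Nat.cast_ne_zero.mpr (by omega) : (k : ℂ) ≠ 0) hmul
      · rw [Multiset.esymm, Multiset.esymm, Multiset.powersetCard_eq_empty _ hkN,
          Multiset.powersetCard_eq_empty _ (by omega : Multiset.card t < k)]
  intro k hk
  induction k using Nat.strong_induction_on with
  | _ k ih =>
    have h1 := multiset_newton s k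
    have h2 := multiset_newton t k
    have hS : ∑ a ∈ Finset.HasAntidiagonal.antidiagonal k with a.1 < k,
          (-1 : ℂ) ^ a.1 * s.esymm a.1 * (s.map (· ^ a.2)).sum
        = ∑ a ∈ Finset.HasAntidiagonal.antidiagonal k with a.1 < k,
          (-1 : ℂ) ^ a.1 * t.esymm a.1 * (t.map (· ^ a.2)).sum := by
      have : (-1 : ℂ) ^ (k + 1) * ∑ a ∈ Finset.HasAntidiagonal.antidiagonal k with a.1 < k,
            (-1 : ℂ) ^ a.1 * s.esymm a.1 * (s.map (· ^ a.2)).sum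
          = (-1 : ℂ) ^ (k + 1) * ∑ a ∈ Finset.HasAntidiagonal.antidiagonal k with a.1 < k,
            (-1 : ℂ) ^ a.1 * t.esymm a.1 * (t.map (· ^ a.2)).sum := by
        rw [← h1, ← h2, he k]
      exact mul_left_cancel₀ (pow_ne_zero _ (by norm_num)) this
    have hmem : ((0 : ℕ), k) ∈ {a ∈ Finset.HasAntidiagonal.antidiagonal k | a.1 < k} := by
      simp [Finset.mem_filter, Finset.mem_antidiagonal]; omega
    rw [← Finset.sum_erase_add _ _ hmem, ← Finset.sum_erase_add _ _ hmem] at hS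
    have herase : ∑ a ∈ {a ∈ Finset.HasAntidiagonal.antidiagonal k | a.1 < k}.erase (0, k),
          (-1 : ℂ) ^ a.1 * s.esymm a.1 * (s.map (· ^ a.2)).sum
        = ∑ a ∈ {a ∈ Finset.HasAntidiagonal.antidiagonal k | a.1 < k}.erase (0, k),
          (-1 : ℂ) ^ a.1 * t.esymm a.1 * (t.map (· ^ a.2)).sum := by
      apply Finset.sum_congr rfl
      intro a ha
      simp only [Finset.mem_erase, Finset.mem_filter, Finset.HasAntidiagonal.mem_antidiagonal] at ha
      have ha1 : a.1 ≠ 0 := by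
        intro h0
        exact ha.1 (by cases a; simp_all)
      rw [he a.1, ih a.2 (by omega) (by omega)]
    rw [herase] at hS
    have hfin := add_left_cancel hS
    simpa [Multiset.esymm] using hfin


lemma fromBlocks_pow' {n r : ℕ} (A : Matrix (Fin n) (Fin n) ℚ) (k : ℕ) (hk : 1 ≤ k) :
    (Matrix.fromBlocks A 0 0 (0 : Matrix (Fin r) (Fin r) ℚ)) ^ k
      = Matrix.fromBlocks (A ^ k) 0 0 0 := by
  induction k with
  | zero => omega
  | succ k ih =>
    rcases Nat.eq_zero_or_pos k with h0 | h0
    · subst h0; simp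
    rw [pow_succ, ih h0, Matrix.fromBlocks_multiply, pow_succ]
    simp

lemma trace_fromBlocks' {n r : ℕ} (A : Matrix (Fin n) (Fin n) ℚ) :
    (Matrix.fromBlocks A 0 0 (0 : Matrix (Fin r) (Fin r) ℚ)).trace = A.trace := by
  simp [Matrix.trace, Fintype.sum_sum_type]

lemma trace_map' {ι : Type*} [Fintype ι] (M : Matrix ι ι ℚ) :
    (M.map (algebraMap ℚ ℂ)).trace = algebraMap ℚ ℂ M.trace := by
  simp [Matrix.trace, Matrix.map_apply]

/-- For an `n × n` matrix `A` and an `m × m` matrix `B` over `ℚ`,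
the traces of `A ^ k` and `B ^ k` agree for all `k ≥ 1` iff they agree for all
`k` with `1 ≤ k ≤ max n m`. -/
theorem traces_eq_iff_traces_eq_up_to_max
    {n m : ℕ} (A : Matrix (Fin n) (Fin n) ℚ) (B : Matrix (Fin m) (Fin m) ℚ) :
    (∀ k : ℕ, 1 ≤ k → (A ^ k).trace = (B ^ k).trace) ↔
      (∀ k : ℕ, 1 ≤ k → k ≤ max n m → (A ^ k).trace = (B ^ k).trace) := by
  constructor
  · exact fun H k hk _ => H k hk
  · intro H k hk
    set N := max n m with hNdef
    set A' : Matrix (Fin n ⊕ Fin (N - n)) (Fin n ⊕ Fin (N - n)) ℚ :=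
      Matrix.fromBlocks A 0 0 0 with hA'
    set B' : Matrix (Fin m ⊕ Fin (N - m)) (Fin m ⊕ Fin (N - m)) ℚ :=
      Matrix.fromBlocks B 0 0 0 with hB'
    have hAtr : ∀ j, 1 ≤ j → (A' ^ j).trace = (A ^ j).trace := fun j hj => by
      rw [hA', fromBlocks_pow' A j hj, trace_fromBlocks']
    have hBtr : ∀ j, 1 ≤ j → (B' ^ j).trace = (B ^ j).trace := fun j hj => by
      rw [hB', fromBlocks_pow' B j hj, trace_fromBlocks']
    set Ac := A'.map (algebraMap ℚ ℂ) with hAc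
    set Bc := B'.map (algebraMap ℚ ℂ) with hBc
    have hAcpow : ∀ j : ℕ, Ac ^ j = (A' ^ j).map (algebraMap ℚ ℂ) := fun j => by
      rw [hAc, ← RingHom.mapMatrix_apply, ← RingHom.mapMatrix_apply, map_pow]
    have hBcpow : ∀ j : ℕ, Bc ^ j = (B' ^ j).map (algebraMap ℚ ℂ) := fun j => by
      rw [hBc, ← RingHom.mapMatrix_apply, ← RingHom.mapMatrix_apply, map_pow]
    have hcardA : Multiset.card Ac.charpoly.roots = N := by
      rw [Polynomial.splits_iff_card_roots.mp (IsAlgClosed.splits _),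
        Matrix.charpoly_natDegree_eq_dim]
      simp [Fintype.card_sum]
      omega
    have hcardB : Multiset.card Bc.charpoly.roots = N := by
      rw [Polynomial.splits_iff_card_roots.mp (IsAlgClosed.splits _),
        Matrix.charpoly_natDegree_eq_dim]
      simp [Fintype.card_sum]
      omega
    have hps : ∀ j, 1 ≤ j → j ≤ Multiset.card Ac.charpoly.roots →
        (Ac.charpoly.roots.map (· ^ j)).sum = (Bc.charpoly.roots.map (· ^ j)).sum := by
      intro j h1 h2
      rw [← trace_pow_eq_sum_pow_roots _ _ h1, ← trace_pow_eq_sum_pow_roots _ _ h1,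
        hAcpow, hBcpow, _root_.trace_map', _root_.trace_map', hAtr j h1, hBtr j h1,
        H j h1 (by rw [hcardA] at h2; exact h2)]
    have hall := psum_ext _ _ (by rw [hcardA, hcardB]) hps k hk
    rw [← trace_pow_eq_sum_pow_roots _ _ hk, ← trace_pow_eq_sum_pow_roots _ _ hk,
      hAcpow, hBcpow, _root_.trace_map', _root_.trace_map', hAtr k hk, hBtr k hk] at hall
    exact (algebraMap ℚ ℂ).injective hall
end

section
/- Let A and B be n×n integer matrices. Define the 3n×3n matrices D = [[A⁺, A⁻, 0],[A⁻, A⁺, 0],[0, 0, |B|]] and E = [[B⁺, B⁻, 0],[B⁻, B⁺, 0],[0, 0, |A|]] (block matrices on index type (Fin n ⊕ Fin n) ⊕ Fin n). Then all entries of D and E are nonnegative, and charpoly A = charpoly B if and only if charpoly D = charpoly E. -/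
/-- Entrywise positive part of an integer matrix. -/
def Matrix.entryPosPart {n : ℕ} (A : Matrix (Fin n) (Fin n) ℤ) : Matrix (Fin n) (Fin n) ℤ :=
  Matrix.of fun i j => max (A i j) 0

/-- Entrywise negative part of an integer matrix. -/
def Matrix.entryNegPart {n : ℕ} (A : Matrix (Fin n) (Fin n) ℤ) : Matrix (Fin n) (Fin n) ℤ :=
  Matrix.of fun i j => max (-A i j) 0

/-- The `3n × 3n` block matrix `[[A⁺, A⁻, 0], [A⁻, A⁺, 0], [0, 0, |B|]]`
(where `|B| = B⁺ + B⁻`) on the index type `(Fin n ⊕ Fin n) ⊕ Fin n`. -/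
def blockGadget {n : ℕ} (A B : Matrix (Fin n) (Fin n) ℤ) :
    Matrix ((Fin n ⊕ Fin n) ⊕ Fin n) ((Fin n ⊕ Fin n) ⊕ Fin n) ℤ :=
  Matrix.fromBlocks
    (Matrix.fromBlocks A.entryPosPart A.entryNegPart A.entryNegPart A.entryPosPart)
    0 0 (B.entryPosPart + B.entryNegPart)

open Polynomial Matrix

section Aux

variable {m : Type*} [Fintype m] [DecidableEq m]

lemma charpoly_conj_aux (U V M : Matrix m m ℤ) (hUV : U * V = 1) (hVU : V * U = 1) :
    (V * M * U).charpoly = M.charpoly := by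
  have hmap : ∀ P Q : Matrix m m ℤ, (P * Q).map (C : ℤ → ℤ[X]) = P.map C * Q.map C :=
    fun P Q => Matrix.map_mul
  have hscalar : (scalar m (X : ℤ[X])) = (X : ℤ[X]) • (1 : Matrix m m ℤ[X]) := by
    rw [Matrix.smul_one_eq_diagonal, scalar_apply]
  have key : charmatrix (V * M * U) = V.map C * charmatrix M * U.map C := by
    simp only [charmatrix, RingHom.mapMatrix_apply]
    rw [mul_sub, sub_mul, ← hmap, ← hmap]
    congr 1
    rw [hscalar, mul_smul_comm, mul_one, smul_mul_assoc, ← hmap, hVU,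
      Matrix.map_one _ C.map_zero C.map_one]
  unfold Matrix.charpoly
  rw [key, det_mul, det_mul, mul_comm, ← mul_assoc, ← det_mul, ← hmap, hUV,
    Matrix.map_one _ C.map_zero C.map_one, det_one, one_mul]

lemma charpoly_fromBlocks_swap (P Q : Matrix m m ℤ) :
    (fromBlocks P Q Q P).charpoly = (P + Q).charpoly * (P - Q).charpoly := by
  have hconj : (fromBlocks 1 0 (-1) 1 : Matrix (m ⊕ m) (m ⊕ m) ℤ) * fromBlocks P Q Q P *
      fromBlocks 1 0 1 1 = fromBlocks (P + Q) Q 0 (P - Q) := by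
    simp [Matrix.fromBlocks_multiply]
    abel
  have h1 : (fromBlocks 1 0 1 1 : Matrix (m ⊕ m) (m ⊕ m) ℤ) * fromBlocks 1 0 (-1) 1 = 1 := by
    simp [Matrix.fromBlocks_multiply, fromBlocks_one]
  have h2 : (fromBlocks 1 0 (-1) 1 : Matrix (m ⊕ m) (m ⊕ m) ℤ) * fromBlocks 1 0 1 1 = 1 := by
    simp [Matrix.fromBlocks_multiply, fromBlocks_one]
  rw [← charpoly_conj_aux (fromBlocks 1 0 1 1) (fromBlocks 1 0 (-1) 1) _ h1 h2, hconj,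
    Matrix.charpoly_fromBlocks_zero₂₁]

end Aux

lemma entryPos_sub_entryNeg {n : ℕ} (A : Matrix (Fin n) (Fin n) ℤ) :
    A.entryPosPart - A.entryNegPart = A := by
  ext i j
  simp only [Matrix.sub_apply, Matrix.entryPosPart, Matrix.entryNegPart, Matrix.of_apply]
  omega

lemma blockGadget_charpoly {n : ℕ} (A B : Matrix (Fin n) (Fin n) ℤ) :
    (blockGadget A B).charpoly =
      (A.entryPosPart + A.entryNegPart).charpoly * A.charpoly *
        (B.entryPosPart + B.entryNegPart).charpoly := by
  rw [blockGadget, Matrix.charpoly_fromBlocks_zero₂₁, charpoly_fromBlocks_swap,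
    entryPos_sub_entryNeg]

/-- For `n × n` integer matrices `A, B`, the block matrices
`D = [[A⁺, A⁻, 0], [A⁻, A⁺, 0], [0, 0, |B|]]` and `E = [[B⁺, B⁻, 0], [B⁻, B⁺, 0], [0, 0, |A|]]`
have nonnegative entries, and `charpoly A = charpoly B` iff `charpoly D = charpoly E`. -/
theorem charpoly_eq_iff_charpoly_blockGadget_eq
    {n : ℕ} (A B : Matrix (Fin n) (Fin n) ℤ) :
    (∀ i j, 0 ≤ blockGadget A B i j) ∧ (∀ i j, 0 ≤ blockGadget B A i j) ∧
      (A.charpoly = B.charpoly ↔ (blockGadget A B).charpoly = (blockGadget B A).charpoly) := by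
  have hnn : ∀ (X Y : Matrix (Fin n) (Fin n) ℤ) i j, 0 ≤ blockGadget X Y i j := by
    rintro X Y ((i | i) | i) ((j | j) | j) <;>
      simp [blockGadget, Matrix.entryPosPart, Matrix.entryNegPart, Matrix.fromBlocks]
  refine ⟨hnn A B, hnn B A, ?_, ?_⟩
  · intro h
    rw [blockGadget_charpoly, blockGadget_charpoly, h]
    ring
  · intro h
    rw [blockGadget_charpoly, blockGadget_charpoly] at h
    set p := (A.entryPosPart + A.entryNegPart).charpoly with hp
    set q := (B.entryPosPart + B.entryNegPart).charpoly with hq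
    have hK : p * q ≠ 0 := ((Matrix.charpoly_monic _).mul (Matrix.charpoly_monic _)).ne_zero
    have : A.charpoly * (p * q) = B.charpoly * (p * q) := by linear_combination h
    exact mul_right_cancel₀ hK this
end

section
/- Let A = (n states, Σ, M, α, η) be a multiplicity word automaton over ℚ, and let T₂ = Σ_{a ∈ Σ} M(a) ⊗ M(a). Then ⟦A⟧(w) = 0 for every word w ∈ Σ* if and only if Σ_{k=0}^{n−1} (α ⊗ α)ᵀ · T₂^k · (η ⊗ η) = 0. -/
/-!
Since `(α ⊗ α)ᵀ (A ⊗ A) (η ⊗ η) = (αᵀ A η)²`, expanding `T₂ᵏ` over words shows that the `k`-th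
term of the sum is the sum of the squares of the values of all words of length `k`. So the sum
vanishes iff all words of length `< n` have value `0`. This suffices: the spans of the vectors
`M(w) η` over words of length `< k` increase with `k`, and once two consecutive ones agree the
chain is constant, which happens by `k = n` for dimension reasons.
-/

open Matrix Kronecker

/-- The value assigned by the multiplicity word automaton `(α, M, η)` to a word
`w ∈ Σ*`: `αᵀ ⋅ M(a₁)⋯M(a_t) ⋅ η`. -/
def mwaValue {Sig : Type*} {n : ℕ} (α η : Fin n → ℚ)
    (M : Sig → Matrix (Fin n) (Fin n) ℚ) (w : List Sig) : ℚ :=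
  α ⬝ᵥ ((w.map M).prod).mulVec η

section Kronecker

variable {R m Sig : Type*} [CommSemiring R] [Fintype m]

theorem dotProduct_kronecker_mulVec (u v x y : m → R) (A B : Matrix m m R) :
    (fun p : m × m => u p.1 * v p.2) ⬝ᵥ (A ⊗ₖ B) *ᵥ (fun p : m × m => x p.1 * y p.2)
      = (u ⬝ᵥ A *ᵥ x) * (v ⬝ᵥ B *ᵥ y) := by
  have hmulVec : (A ⊗ₖ B) *ᵥ (fun p : m × m => x p.1 * y p.2)
      = fun p => (A *ᵥ x) p.1 * (B *ᵥ y) p.2 := by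
    ext ⟨i, j⟩
    simp only [mulVec, dotProduct, kroneckerMap_apply, Fintype.sum_prod_type, Finset.sum_mul_sum,
      mul_mul_mul_comm]
  rw [hmulVec]
  simp only [dotProduct, Fintype.sum_prod_type, Finset.sum_mul_sum, mul_mul_mul_comm]

theorem sum_kronecker_self_pow [Fintype Sig] [DecidableEq m] (M : Sig → Matrix m m R) (k : ℕ) :
    (∑ a, M a ⊗ₖ M a) ^ k
      = ∑ w : Fin k → Sig, ((List.ofFn w).map M).prod ⊗ₖ ((List.ofFn w).map M).prod := by
  induction k with
  | zero => simp
  | succ k ih =>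
    rw [pow_succ', ih, Finset.sum_mul_sum, ← (Fin.consEquiv fun _ => Sig).sum_comp,
      Fintype.sum_prod_type]
    simp [Fin.consEquiv, List.ofFn_succ, mul_kronecker_mul]

theorem dotProduct_sum_kronecker_self_pow_mulVec [Fintype Sig] [DecidableEq m]
    (α η : m → R) (M : Sig → Matrix m m R) (k : ℕ) :
    (fun p : m × m => α p.1 * α p.2) ⬝ᵥ (∑ a, M a ⊗ₖ M a) ^ k *ᵥ (fun p : m × m => η p.1 * η p.2)
      = ∑ w : Fin k → Sig, (α ⬝ᵥ ((List.ofFn w).map M).prod *ᵥ η) ^ 2 := by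
  simp only [sum_kronecker_self_pow, sum_mulVec, dotProduct_sum, dotProduct_kronecker_mulVec, sq]

end Kronecker

theorem Submodule.exists_le_finrank_eq_succ_of_monotone {K V : Type*} [DivisionRing K]
    [AddCommGroup V] [Module K V] [FiniteDimensional K V] {f : ℕ → Submodule K V}
    (hf : Monotone f) : ∃ k ≤ Module.finrank K V, f (k + 1) = f k := by
  by_contra! h
  have hgrow : ∀ k ≤ Module.finrank K V + 1, k ≤ Module.finrank K (f k) := by
    intro k hk
    induction k with
    | zero => exact Nat.zero_le _
    | succ k ih =>
      have hlt : f k < f (k + 1) := (hf k.le_succ).lt_of_ne (h k (by omega)).symm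
      exact (ih (by omega)).trans_lt (Submodule.finrank_lt_finrank_of_lt hlt)
  have := (hgrow _ le_rfl).trans (Submodule.finrank_le _)
  omega

section WordSpan

variable {K ι Sig : Type*} [Field K] [Fintype ι] (M : Sig → Matrix ι ι K) (η : ι → K)

def wordSpanStep (U : Submodule K (ι → K)) : Submodule K (ι → K) :=
  K ∙ η ⊔ ⨆ a, U.map (M a).mulVecLin

/-- `wordSpan M η k` is the span of the vectors `M(w) η` over words `w` of length `< k`. -/
def wordSpan (k : ℕ) : Submodule K (ι → K) :=
  (wordSpanStep M η)^[k] ⊥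

theorem wordSpanStep_mono : Monotone (wordSpanStep M η) :=
  fun _ _ h => sup_le_sup_left (iSup_mono fun _ => Submodule.map_mono h) _

theorem wordSpan_mono : Monotone (wordSpan M η) :=
  (wordSpanStep_mono M η).monotone_iterate_of_le_map bot_le

theorem wordSpan_succ (k : ℕ) : wordSpan M η (k + 1) = wordSpanStep M η (wordSpan M η k) :=
  Function.iterate_succ_apply' _ _ _

theorem prod_mulVec_mem_wordSpan [DecidableEq ι] (w : List Sig) :
    (w.map M).prod *ᵥ η ∈ wordSpan M η (w.length + 1) := by
  rw [wordSpan_succ]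
  induction w with
  | nil => exact Submodule.mem_sup_left (by simp)
  | cons a w ih =>
    rw [List.map_cons, List.prod_cons, ← mulVec_mulVec]
    exact Submodule.mem_sup_right
      (Submodule.mem_iSup_of_mem a (Submodule.mem_map_of_mem (wordSpan_succ M η _ ▸ ih)))

theorem wordSpan_le_span [DecidableEq ι] (k : ℕ) :
    wordSpan M η k ≤
      Submodule.span K {v | ∃ w : List Sig, w.length < k ∧ v = (w.map M).prod *ᵥ η} := by
  induction k with
  | zero => exact bot_le
  | succ k ih =>
    rw [wordSpan_succ]
    refine sup_le ((Submodule.span_singleton_le_iff_mem _ _).2 ?_) (iSup_le fun a => ?_)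
    · exact Submodule.subset_span ⟨[], by simp, by simp⟩
    · rw [Submodule.map_le_iff_le_comap]
      refine ih.trans (Submodule.span_le.2 ?_)
      rintro _ ⟨w, hw, rfl⟩
      exact Submodule.subset_span ⟨a :: w, by simpa using hw, by simp [mulVec_mulVec]⟩

theorem wordSpan_le_wordSpan_card (k : ℕ) :
    wordSpan M η k ≤ wordSpan M η (Fintype.card ι) := by
  obtain ⟨j, hj, hfix⟩ := Submodule.exists_le_finrank_eq_succ_of_monotone (wordSpan_mono M η)
  rw [Module.finrank_fintype_fun_eq_card] at hj
  have hstable : ∀ m ≥ j, wordSpan M η m = wordSpan M η j := fun m hm => by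
    rw [wordSpan_succ] at hfix
    rw [wordSpan, ← Nat.sub_add_cancel hm, Function.iterate_add_apply]
    exact Function.iterate_fixed hfix _
  calc wordSpan M η k ≤ wordSpan M η (max k (Fintype.card ι)) := wordSpan_mono M η (le_max_left ..)
    _ = wordSpan M η (Fintype.card ι) := by
      rw [hstable _ (hj.trans (le_max_right ..)), hstable _ hj]

theorem dotProduct_prod_mulVec_eq_zero_of_forall_length_lt [DecidableEq ι] (α : ι → K)
    (h : ∀ w : List Sig, w.length < Fintype.card ι → α ⬝ᵥ (w.map M).prod *ᵥ η = 0)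
    (w : List Sig) : α ⬝ᵥ (w.map M).prod *ᵥ η = 0 := by
  have hker : wordSpan M η (Fintype.card ι) ≤ LinearMap.ker (dotProductBilin K K α) := by
    refine (wordSpan_le_span M η _).trans (Submodule.span_le.2 ?_)
    rintro _ ⟨w, hw, rfl⟩
    exact h w hw
  exact hker (wordSpan_le_wordSpan_card M η _ (prod_mulVec_mem_wordSpan M η w))

end WordSpan

/-- A multiplicity word automaton with `n` states recognises the zero
series iff `∑_{k=0}^{n-1} (α ⊗ α)ᵀ ⋅ T₂ ^ k ⋅ (η ⊗ η) = 0`, where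
`T₂ = ∑ a, M a ⊗ₖ M a`. -/
theorem mwa_zero_iff_kronecker_sum_eq_zero
    {Sig : Type*} [Fintype Sig] {n : ℕ} (α η : Fin n → ℚ)
    (M : Sig → Matrix (Fin n) (Fin n) ℚ) :
    (∀ w : List Sig, mwaValue α η M w = 0) ↔
      ∑ k ∈ Finset.range n,
        (fun p : Fin n × Fin n => α p.1 * α p.2) ⬝ᵥ
          ((∑ a : Sig, M a ⊗ₖ M a) ^ k).mulVec (fun p : Fin n × Fin n => η p.1 * η p.2)
        = 0 := by
  simp only [mwaValue, dotProduct_sum_kronecker_self_pow_mulVec]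
  rw [Finset.sum_eq_zero_iff_of_nonneg fun k _ => Finset.sum_nonneg fun w _ => sq_nonneg _]
  simp only [Finset.mem_range, Fintype.sum_eq_zero_iff_of_nonneg fun w => sq_nonneg _, funext_iff,
    Pi.zero_apply, sq_eq_zero_iff]
  constructor
  · exact fun h k _ w => h _
  · intro h
    refine dotProduct_prod_mulVec_eq_zero_of_forall_length_lt M η α fun w hw => ?_
    simpa using h w.length (by simpa using hw) w.get
end

section
/- Let A = (n states, Σ, M, α, η) be a multiplicity word automaton over ℚ. Then ⟦A⟧(w) = 0 for every word w ∈ Σ* if and only if ⟦A⟧(w) = 0 for every word w ∈ Σ* of length at most n − 1 (equivalently, of length < n). -/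
/-!
Let `V k` be the span of the vectors `M(a₁)⋯M(aₜ) η` over words of length `t < k`. Then
`V (k + 1) = span {η} ⊔ ⨆ a, M(a) V k`, so the `V k` are the iterates from `⊥` of one monotone
operator on subspaces of `ℚⁿ`. The chain grows strictly until it reaches a fixed point, and its
dimension is at most `n`, so it is constant from `V n` on. Hence the vector of every word is a
linear combination of vectors of words of length `< n`, and `α ⬝ᵥ ·` is linear.
-/

open Matrix

open Module

theorem OrderHom.iterate_bot_le_of_isFixedPt {α : Type*} [Preorder α] [OrderBot α] (F : α →o α)
    {x : α} (hx : Function.IsFixedPt F x) (m : ℕ) : F^[m] ⊥ ≤ x := by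
  induction m with
  | zero => exact bot_le
  | succ m ih =>
    rw [Function.iterate_succ_apply', ← hx]
    exact F.monotone ih

section Stabilization

variable {K V : Type*} [DivisionRing K] [AddCommGroup V] [Module K V] [FiniteDimensional K V]
  (F : Submodule K V →o Submodule K V)

theorem OrderHom.le_finrank_iterate_bot_or_isFixedPt (k : ℕ) :
    k ≤ finrank K (F^[k] ⊥) ∨ Function.IsFixedPt F (F^[k] ⊥) := by
  induction k with
  | zero => exact Or.inl (Nat.zero_le _)
  | succ k ih =>
    rw [Function.iterate_succ_apply']
    by_cases hfix : Function.IsFixedPt F (F^[k] ⊥)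
    · right
      rw [hfix]
      exact hfix
    · have hlt : F^[k] ⊥ < F (F^[k] ⊥) :=
        ((F.monotone.monotone_iterate_of_le_map bot_le k.le_succ).trans_eq
          (Function.iterate_succ_apply' _ _ _)).lt_of_ne (Ne.symm hfix)
      exact Or.inl ((ih.resolve_right hfix).trans_lt (Submodule.finrank_lt_finrank_of_lt hlt))

theorem OrderHom.iterate_bot_le_iterate_finrank (m : ℕ) : F^[m] ⊥ ≤ F^[finrank K V] ⊥ := by
  rcases F.le_finrank_iterate_bot_or_isFixedPt (finrank K V) with hrank | hfix
  · rw [Submodule.eq_top_of_finrank_eq (le_antisymm (Submodule.finrank_le _) hrank)]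
    exact le_top
  · exact F.iterate_bot_le_of_isFixedPt hfix m

end Stabilization

section WordVectors

variable {K Sig ι : Type*} [Field K] [Fintype ι] [DecidableEq ι]
  (M : Sig → Matrix ι ι K) (η : ι → K)

def wordVec (w : List Sig) : ι → K := (w.map M).prod *ᵥ η

@[simp]
theorem wordVec_nil : wordVec M η [] = η := by
  simp [wordVec]

@[simp]
theorem wordVec_cons (a : Sig) (w : List Sig) :
    wordVec M η (a :: w) = M a *ᵥ wordVec M η w := by
  simp [wordVec, mulVec_mulVec]

def wordVecStep : Submodule K (ι → K) →o Submodule K (ι → K) where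
  toFun W := K ∙ η ⊔ ⨆ a, W.map (M a).mulVecLin
  monotone' _ _ h := sup_le_sup_left (iSup_mono fun _ => Submodule.map_mono h) _

theorem wordVec_mem_iterate_wordVecStep (w : List Sig) :
    wordVec M η w ∈ (wordVecStep M η)^[w.length + 1] ⊥ := by
  rw [Function.iterate_succ_apply']
  induction w with
  | nil =>
    rw [wordVec_nil]
    exact Submodule.mem_sup_left (Submodule.mem_span_singleton_self η)
  | cons a w ih =>
    rw [List.length_cons, Function.iterate_succ_apply', wordVec_cons]
    exact Submodule.mem_sup_right
      (Submodule.mem_iSup_of_mem a (Submodule.mem_map_of_mem (f := (M a).mulVecLin) ih))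

theorem wordVecStep_span_le (k : ℕ) :
    wordVecStep M η (Submodule.span K (wordVec M η '' {w | w.length < k})) ≤
      Submodule.span K (wordVec M η '' {w | w.length < k + 1}) := by
  refine sup_le ?_ (iSup_le fun a => ?_)
  · rw [Submodule.span_singleton_le_iff_mem]
    exact Submodule.subset_span ⟨[], Nat.succ_pos k, wordVec_nil M η⟩
  · rw [Submodule.map_span, Submodule.span_le]
    rintro _ ⟨_, ⟨w, hw, rfl⟩, rfl⟩
    exact Submodule.subset_span ⟨a :: w, Nat.succ_lt_succ hw, wordVec_cons M η a w⟩

theorem iterate_wordVecStep_le_span (k : ℕ) :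
    (wordVecStep M η)^[k] ⊥ ≤ Submodule.span K (wordVec M η '' {w | w.length < k}) := by
  induction k with
  | zero => exact bot_le
  | succ k ih =>
    rw [Function.iterate_succ_apply']
    exact ((wordVecStep M η).monotone ih).trans (wordVecStep_span_le M η k)

theorem wordVec_mem_span_short (w : List Sig) :
    wordVec M η w ∈
      Submodule.span K (wordVec M η '' {w : List Sig | w.length < Fintype.card ι}) := by
  rw [← finrank_fintype_fun_eq_card K]
  exact iterate_wordVecStep_le_span M η _
    ((wordVecStep M η).iterate_bot_le_iterate_finrank _ (wordVec_mem_iterate_wordVecStep M η w))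

end WordVectors

theorem mwa_zero_iff_zero_on_short_words_general
    {Sig : Type*} {n : ℕ} (α η : Fin n → ℚ)
    (M : Sig → Matrix (Fin n) (Fin n) ℚ) :
    (∀ w : List Sig, mwaValue α η M w = 0) ↔
      (∀ w : List Sig, w.length < n → mwaValue α η M w = 0) := by
  refine ⟨fun h w _ => h w, fun h w => ?_⟩
  have hshort : Submodule.span ℚ (wordVec M η '' {w : List Sig | w.length < n}) ≤
      LinearMap.ker (dotProductBilin ℚ ℚ α) := by
    rw [Submodule.span_le]
    rintro _ ⟨u, hu, rfl⟩
    exact h u hu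
  have hw := wordVec_mem_span_short M η w
  rw [Fintype.card_fin] at hw
  exact hshort hw

/-- A multiplicity word automaton with `n` states recognises the zero
series iff it assigns `0` to every word of length `< n` (i.e. of length at most `n - 1`). -/
theorem mwa_zero_iff_zero_on_short_words
    {Sig : Type*} [Fintype Sig] {n : ℕ} (α η : Fin n → ℚ)
    (M : Sig → Matrix (Fin n) (Fin n) ℚ) :
    (∀ w : List Sig, mwaValue α η M w = 0) ↔
      (∀ w : List Sig, w.length < n → mwaValue α η M w = 0) :=
  mwa_zero_iff_zero_on_short_words_general α η M
end

section
/- Let F be a connected finite simple graph and let G, H, G', H' be finite simple graphs. Then hom(F, (G×G) ⊔ (H×H) ⊔ (G'×G') ⊔ (H'×H')) = hom(F, (G×H) ⊔ (G×H) ⊔ (G'×H') ⊔ (G'×H')) if and only if hom(F,G) = hom(F,H) and hom(F,G') = hom(F,H'). -/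
/-- The tensor (categorical) product of two simple graphs: vertices are pairs, and
`(a, b)` is adjacent to `(c, d)` iff `a ~ c` and `b ~ d`. -/
def SimpleGraph.tensorProd {α β : Type*} (G : SimpleGraph α) (H : SimpleGraph β) :
    SimpleGraph (α × β) where
  Adj p q := G.Adj p.1 q.1 ∧ H.Adj p.2 q.2
  symm := ⟨fun _ _ h => ⟨h.1.symm, h.2.symm⟩⟩
  loopless := ⟨fun p h => G.loopless.irrefl p.1 h.1⟩

section Aux

variable {VF α β : Type*} {F : SimpleGraph VF} {A : SimpleGraph α} {B : SimpleGraph β}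

/-- Homs into a tensor product correspond to pairs of homs. -/
def homTensorEquiv (F : SimpleGraph VF) (A : SimpleGraph α) (B : SimpleGraph β) :
    (F →g A.tensorProd B) ≃ (F →g A) × (F →g B) where
  toFun f := (⟨fun v => (f v).1, fun h => (f.map_adj h).1⟩,
              ⟨fun v => (f v).2, fun h => (f.map_adj h).2⟩)
  invFun p := ⟨fun v => (p.1 v, p.2 v), fun h => ⟨p.1.map_adj h, p.2.map_adj h⟩⟩
  left_inv f := rfl
  right_inv p := rfl

lemma hom_sum_sameSide (f : F →g (A ⊕g B)) {u v : VF} (h : F.Reachable u v) :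
    (f u).isLeft = (f v).isLeft := by
  obtain ⟨w⟩ := h
  induction w with
  | nil => rfl
  | cons hadj _ ih =>
    refine Eq.trans ?_ ih
    have hA := f.map_adj hadj
    cases hu : f _ <;> cases hv : f _ <;> rw [hu, hv] at hA <;> simp_all [SimpleGraph.sum]

/-- For connected `F`, homs into a disjoint sum split. -/
noncomputable def homSumEquiv (hF : F.Connected) (A : SimpleGraph α) (B : SimpleGraph β) :
    (F →g (A ⊕g B)) ≃ (F →g A) ⊕ (F →g B) := by
  classical
  have hne : Nonempty VF := hF.nonempty
  exact {
    toFun := fun f =>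
      if hL : ∀ v, (f v).isLeft then
        Sum.inl ⟨fun v => (f v).getLeft (hL v), by
          intro u v h
          have hA := f.map_adj h
          rw [← Sum.inl_getLeft (f u) (hL u), ← Sum.inl_getLeft (f v) (hL v)] at hA
          exact hA⟩
      else
        Sum.inr ⟨fun v => (f v).getRight (by
            push_neg at hL
            obtain ⟨v0, hv0⟩ := hL
            have := hom_sum_sameSide f (hF.preconnected v v0)
            simp only [Bool.not_eq_true] at hv0
            rw [← Sum.not_isLeft, this, hv0]
            simp), by
          intro u v h
          have hA := f.map_adj h
          rw [← Sum.inr_getRight (f u) _, ← Sum.inr_getRight (f v) _] at hA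
          exact hA⟩
    invFun := fun g => Sum.elim (fun g => SimpleGraph.Hom.comp SimpleGraph.Embedding.sumInl.toHom g)
      (fun g => SimpleGraph.Hom.comp SimpleGraph.Embedding.sumInr.toHom g) g
    left_inv := by
      intro f
      by_cases hL : ∀ v, (f v).isLeft
      · simp only [dif_pos hL]
        ext v
        exact Sum.inl_getLeft (f v) (hL v)
      · simp only [dif_neg hL]
        ext v
        exact Sum.inr_getRight (f v) _
    right_inv := by
      rintro (g | g)
      · dsimp only [Sum.elim_inl]
        split_ifs with h
        · exact congrArg Sum.inl (RelHom.ext fun v => rfl)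
        · exact absurd (fun v => rfl) h
      · dsimp only [Sum.elim_inr]
        split_ifs with h
        · exact absurd (h (Classical.arbitrary VF)) (by simp)
        · exact congrArg Sum.inr (RelHom.ext fun v => rfl) }

lemma card_hom_tensor (F : SimpleGraph VF) (A : SimpleGraph α) (B : SimpleGraph β) :
    Nat.card (F →g A.tensorProd B) = Nat.card (F →g A) * Nat.card (F →g B) := by
  rw [Nat.card_congr (homTensorEquiv F A B), Nat.card_prod]

lemma card_hom_sum [Finite VF] [Finite α] [Finite β] (hF : F.Connected)
    (A : SimpleGraph α) (B : SimpleGraph β) :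
    Nat.card (F →g (A ⊕g B)) = Nat.card (F →g A) + Nat.card (F →g B) := by
  rw [Nat.card_congr (homSumEquiv hF A B), Nat.card_sum]

lemma nat_sq_eq_iff (a b c d : ℕ) :
    a * a + b * b + (c * c + d * d) = a * b + a * b + (c * d + c * d) ↔ (a = b ∧ c = d) := by
  constructor
  · intro h
    have h' : (a : ℤ) * a + b * b + (c * c + d * d) = a * b + a * b + (c * d + c * d) := by
      exact_mod_cast h
    constructor
    · have : (a : ℤ) = b := by nlinarith [sq_nonneg ((a : ℤ) - b), sq_nonneg ((c : ℤ) - d)]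
      exact_mod_cast this
    · have : (c : ℤ) = d := by nlinarith [sq_nonneg ((a : ℤ) - b), sq_nonneg ((c : ℤ) - d)]
      exact_mod_cast this
  · rintro ⟨rfl, rfl⟩
    ring

end Aux

/-- For a connected finite simple graph `F` and finite simple graphs
`G, H, G', H'`, we have
`hom(F, G×G ⊔ H×H ⊔ G'×G' ⊔ H'×H') = hom(F, G×H ⊔ G×H ⊔ G'×H' ⊔ G'×H')`
iff `hom(F, G) = hom(F, H)` and `hom(F, G') = hom(F, H')`. -/
theorem hom_count_sum_of_squares_eq_iff
    {VF VG VH VG' VH' : Type*} [Fintype VF] [Fintype VG] [Fintype VH]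
    [Fintype VG'] [Fintype VH']
    (F : SimpleGraph VF) (G : SimpleGraph VG) (H : SimpleGraph VH)
    (G' : SimpleGraph VG') (H' : SimpleGraph VH') (hF : F.Connected) :
    (Nat.card (F →g ((G.tensorProd G ⊕g H.tensorProd H) ⊕g
        (G'.tensorProd G' ⊕g H'.tensorProd H'))) =
      Nat.card (F →g ((G.tensorProd H ⊕g G.tensorProd H) ⊕g
        (G'.tensorProd H' ⊕g G'.tensorProd H')))) ↔
      (Nat.card (F →g G) = Nat.card (F →g H) ∧
        Nat.card (F →g G') = Nat.card (F →g H')) := by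
  simp only [card_hom_sum hF, card_hom_tensor]
  exact nat_sq_eq_iff _ _ _ _
end

section
/- For every m ≥ 3: the number of graph homomorphisms from the cycle C_m to the disjoint union C₃ ⊔ C₃ equals the number of graph homomorphisms from C_m to the cycle C₆ if and only if m is even. -/
open SimpleGraph

namespace HomCountAux

/-! ### Basic facts -/

lemma fin2_succ_of_ne {x y : Fin 2} (h : x ≠ y) : y = x + 1 := by
  revert h; revert x y; decide

lemma adj3_of_ne : ∀ x y : Fin 3, x ≠ y → (cycleGraph 3).Adj x y := by decide

lemma eq_add_one_of_sub {n : ℕ} {i j : Fin (n + 3)} (h : (j - i).val = 1) : j = i + 1 := by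
  have h1 : (1 : Fin (n + 3)).val = 1 := rfl
  have h2 : j - i = 1 := Fin.val_injective (by rw [h, h1])
  rw [sub_eq_iff_eq_add] at h2
  exact h2.trans (add_comm 1 i)

lemma adj_succ {n : ℕ} (i : Fin (n + 3)) : (cycleGraph (n + 3)).Adj i (i + 1) := by
  have : (cycleGraph (n + 1 + 2)).Adj i (i + 1) := by
    rw [cycleGraph_adj]
    right
    exact add_sub_cancel_left i 1
  exact this

lemma val_add_one {n : ℕ} (i : Fin (n + 3)) : (i + 1).val = (i.val + 1) % (n + 3) := by
  have h1 : (1 : Fin (n + 3)).val = 1 := rfl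
  rw [Fin.add_def, h1]

lemma mk_succ_eq_add_one {n k : ℕ} (hk : k + 1 < n + 3) :
    (⟨k + 1, hk⟩ : Fin (n + 3)) = ⟨k, by omega⟩ + 1 := by
  apply Fin.ext
  rw [val_add_one]
  simp [Nat.mod_eq_of_lt hk]

/-! ### Homs to `⊤` on `Fin 2` -/

lemma top2_determined {n : ℕ} (f : cycleGraph (n + 3) →g (⊤ : SimpleGraph (Fin 2))) :
    ∀ k (hk : k < n + 3), f ⟨k, hk⟩ = f ⟨0, by omega⟩ + ⟨k % 2, by omega⟩ := by
  intro k
  induction k with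
  | zero =>
    intro hk
    have : (⟨0 % 2, by omega⟩ : Fin 2) = 0 := rfl
    rw [this, add_zero]
  | succ k ih =>
    intro hk
    have hk' : k < n + 3 := by omega
    have hadj := f.map_adj (adj_succ (⟨k, hk'⟩ : Fin (n + 3)))
    rw [← mk_succ_eq_add_one hk] at hadj
    have hne : f ⟨k, hk'⟩ ≠ f ⟨k + 1, hk⟩ := by simpa using hadj
    have hstep := fin2_succ_of_ne hne
    have hp : (⟨k % 2, by omega⟩ : Fin 2) + 1 = ⟨(k + 1) % 2, by omega⟩ := by
      apply Fin.ext
      rw [Fin.add_def]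
      show (k % 2 + 1) % 2 = (k + 1) % 2
      omega
    rw [hstep, ih hk', add_assoc, hp]

def parFun {n : ℕ} (b : Fin 2) (i : Fin (n + 3)) : Fin 2 :=
  b + ⟨i.val % 2, Nat.mod_lt _ two_pos⟩

lemma parFun_ne {n : ℕ} (he : Even (n + 3)) (b : Fin 2) {i j : Fin (n + 3)} (h : j = i + 1) :
    parFun b i ≠ parFun b j := by
  have hcv : j.val = (i.val + 1) % (n + 3) := by rw [h, val_add_one]
  have hm2 : (n + 3) % 2 = 0 := Nat.even_iff.mp he
  have hpar : j.val % 2 ≠ i.val % 2 := by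
    rcases Nat.lt_or_ge (i.val + 1) (n + 3) with hl | hl
    · rw [hcv, Nat.mod_eq_of_lt hl]; omega
    · have hii : i.val = n + 2 := by omega
      rw [hcv, hii]
      rw [show n + 2 + 1 = n + 3 from rfl, Nat.mod_self]
      omega
  intro hcontra
  have h' := add_left_cancel hcontra
  have h'' := congrArg Fin.val h'
  simp only [] at h''
  omega

/-- For even `m = n+3`, the homs into `⊤ (Fin 2)` are classified by the image of `0`. -/
def top2Equiv {n : ℕ} (he : Even (n + 3)) :
    (cycleGraph (n + 3) →g (⊤ : SimpleGraph (Fin 2))) ≃ Fin 2 where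
  toFun f := f ⟨0, Nat.succ_pos _⟩
  invFun b :=
    { toFun := parFun b
      map_rel' := by
        intro i j hij
        rw [cycleGraph_adj'] at hij
        simp only [top_adj]
        rcases hij with h | h
        · exact (parFun_ne he b (eq_add_one_of_sub h)).symm
        · exact parFun_ne he b (eq_add_one_of_sub h)
      }
  left_inv f := by
    apply DFunLike.coe_injective
    funext i
    show parFun (f ⟨0, Nat.succ_pos _⟩) i = f i
    have h := top2_determined f i.val i.isLt
    have hi : (⟨i.val, i.isLt⟩ : Fin (n + 3)) = i := rfl
    rw [hi] at h
    rw [h]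
    rfl
  right_inv b := by
    show parFun b ⟨0, Nat.succ_pos _⟩ = b
    unfold parFun
    have h0 : (⟨(⟨0, Nat.succ_pos _⟩ : Fin (n + 3)).val % 2, Nat.mod_lt _ two_pos⟩ : Fin 2) = 0 := rfl
    rw [h0, add_zero]

lemma adj_wrap {n : ℕ} : (cycleGraph (n + 3)).Adj ⟨n + 2, by omega⟩ ⟨0, by omega⟩ := by
  rw [cycleGraph_adj']
  right
  rw [Fin.sub_def]
  show (n + 3 - (n + 2) + 0) % (n + 3) = 1
  rw [show n + 3 - (n + 2) = 1 by omega]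
  exact Nat.mod_eq_of_lt (by omega)

lemma top2_isEmpty {n : ℕ} (ho : ¬ Even (n + 3)) :
    IsEmpty (cycleGraph (n + 3) →g (⊤ : SimpleGraph (Fin 2))) := by
  constructor
  intro f
  have hm2 : (n + 3) % 2 = 1 := Nat.odd_iff.mp (Nat.not_even_iff_odd.mp ho)
  have hlast : f ⟨n + 2, by omega⟩ = f ⟨0, by omega⟩ + ⟨(n + 2) % 2, by omega⟩ :=
    top2_determined f (n + 2) (by omega)
  have hpar : (⟨(n + 2) % 2, by omega⟩ : Fin 2) = 0 := by
    apply Fin.ext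
    show (n + 2) % 2 = 0
    omega
  rw [hpar, add_zero] at hlast
  have hadj := f.map_adj (adj_wrap (n := n))
  rw [top_adj] at hadj
  exact hadj hlast

/-! ### `C₆ ≅ C₃ × K₂` on the hom-set level -/

def p3 : Fin 6 → Fin 3 := fun x => ⟨x.val % 3, Nat.mod_lt _ (by norm_num)⟩
def p2 : Fin 6 → Fin 2 := fun x => ⟨x.val % 2, Nat.mod_lt _ (by norm_num)⟩
def crt : Fin 3 → Fin 2 → Fin 6 := fun a b => ⟨(4 * a.val + 3 * b.val) % 6, Nat.mod_lt _ (by norm_num)⟩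

lemma p3_adj : ∀ x y : Fin 6, (cycleGraph 6).Adj x y → (cycleGraph 3).Adj (p3 x) (p3 y) := by
  decide

lemma p2_adj : ∀ x y : Fin 6, (cycleGraph 6).Adj x y →
    (⊤ : SimpleGraph (Fin 2)).Adj (p2 x) (p2 y) := by decide

lemma crt_adj : ∀ (a a' : Fin 3) (b b' : Fin 2), (cycleGraph 3).Adj a a' →
    (⊤ : SimpleGraph (Fin 2)).Adj b b' → (cycleGraph 6).Adj (crt a b) (crt a' b') := by decide

lemma crt_p : ∀ x : Fin 6, crt (p3 x) (p2 x) = x := by decide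
lemma p3_crt : ∀ a b, p3 (crt a b) = a := by decide
lemma p2_crt : ∀ a b, p2 (crt a b) = b := by decide

def hom3 : cycleGraph 6 →g cycleGraph 3 := ⟨p3, fun {x y} h => p3_adj x y h⟩
def hom2 : cycleGraph 6 →g (⊤ : SimpleGraph (Fin 2)) := ⟨p2, fun {x y} h => p2_adj x y h⟩

def c6Equiv {n : ℕ} :
    (cycleGraph (n + 3) →g cycleGraph 6) ≃
      (cycleGraph (n + 3) →g cycleGraph 3) × (cycleGraph (n + 3) →g (⊤ : SimpleGraph (Fin 2))) where
  toFun f := (hom3.comp f, hom2.comp f)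
  invFun gh :=
    { toFun := fun i => crt (gh.1 i) (gh.2 i)
      map_rel' := fun {i j} h => crt_adj _ _ _ _ (gh.1.map_adj h) (gh.2.map_adj h) }
  left_inv f := by
    apply DFunLike.coe_injective
    funext i
    exact crt_p (f i)
  right_inv gh := by
    refine Prod.ext ?_ ?_
    · apply DFunLike.coe_injective
      funext i
      exact p3_crt (gh.1 i) (gh.2 i)
    · apply DFunLike.coe_injective
      funext i
      exact p2_crt (gh.1 i) (gh.2 i)

/-! ### Homs into a disjoint sum of two copies -/

def elimHom {α : Type*} (A : SimpleGraph α) : (A ⊕g A) →g A :=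
  ⟨Sum.elim id id, by
    intro u v h
    cases u <;> cases v <;> simp_all [SimpleGraph.sum]⟩

lemma sum_adj_isLeft {α β : Type*} {A : SimpleGraph α} {B : SimpleGraph β} {u v : α ⊕ β}
    (h : (A ⊕g B).Adj u v) : u.isLeft = v.isLeft := by
  cases u <;> cases v <;> simp_all [SimpleGraph.sum]

lemma hom_sum_side' {n : ℕ} {α β : Type*} {A : SimpleGraph α} {B : SimpleGraph β}
    (f : cycleGraph (n + 3) →g (A ⊕g B)) {i j : Fin (n + 3)}
    (h : (cycleGraph (n + 3)).Reachable i j) : (f i).isLeft = (f j).isLeft := by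
  obtain ⟨w⟩ := h
  induction w with
  | nil => rfl
  | cons h p ih => rw [← ih, sum_adj_isLeft (f.map_adj h)]

lemma hom_sum_side {n : ℕ} {α β : Type*} {A : SimpleGraph α} {B : SimpleGraph β}
    (f : cycleGraph (n + 3) →g (A ⊕g B)) (i : Fin (n + 3)) :
    (f i).isLeft = (f 0).isLeft :=
  hom_sum_side' f (cycleGraph_preconnected i 0)

def sumEquiv {n : ℕ} {α : Type*} (A : SimpleGraph α) :
    (cycleGraph (n + 3) →g (A ⊕g A)) ≃ (cycleGraph (n + 3) →g A) × Bool where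
  toFun f := ((elimHom A).comp f, (f 0).isLeft)
  invFun gb :=
    if gb.2 then (Embedding.sumInl.toHom).comp gb.1 else (Embedding.sumInr.toHom).comp gb.1
  left_inv f := by
    rcases hb : (f 0).isLeft with _ | _
    · simp only [hb, if_neg Bool.false_ne_true]
      apply DFunLike.coe_injective
      funext i
      have hside : (f i).isLeft = false := by rw [hom_sum_side f i, hb]
      rcases hfi : f i with a | a
      · simp [hfi] at hside
      · show Sum.inr (Sum.elim id id (f i)) = Sum.inr a
        rw [hfi]
        rfl
    · simp only [hb, if_pos]
      apply DFunLike.coe_injective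
      funext i
      have hside : (f i).isLeft = true := by rw [hom_sum_side f i, hb]
      rcases hfi : f i with a | a
      · show Sum.inl (Sum.elim id id (f i)) = Sum.inl a
        rw [hfi]
        rfl
      · simp [hfi] at hside
  right_inv gb := by
    rcases gb with ⟨g, b⟩
    rcases b with _ | _
    · simp only [if_neg Bool.false_ne_true]
      refine Prod.ext ?_ rfl
      apply DFunLike.coe_injective
      funext i
      rfl
    · simp only [if_pos]
      refine Prod.ext ?_ rfl
      apply DFunLike.coe_injective
      funext i
      rfl

/-! ### A hom `C_m → C₃` always exists -/

def colFun (n : ℕ) : Fin (n + 3) → Fin 3 :=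
  fun i => if i.val = n + 2 then 2 else ⟨i.val % 2, by omega⟩

lemma colFun_ne {n : ℕ} {i j : Fin (n + 3)} (h : j = i + 1) : colFun n i ≠ colFun n j := by
  have hjv : j.val = (i.val + 1) % (n + 3) := by rw [h, val_add_one]
  unfold colFun
  rcases eq_or_ne i.val (n + 2) with hi | hi
  · have hj0 : j.val = 0 := by rw [hjv, hi]; simp
    rw [if_pos hi, if_neg (by omega)]
    intro hc
    have := congrArg Fin.val hc
    simp at this
    omega
  · have hjv' : j.val = i.val + 1 := by
      rw [hjv, Nat.mod_eq_of_lt (by omega)]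
    rw [if_neg hi]
    rcases eq_or_ne j.val (n + 2) with hj | hj
    · rw [if_pos hj]
      intro hc
      have := congrArg Fin.val hc
      simp at this
      omega
    · rw [if_neg hj]
      intro hc
      have := congrArg Fin.val hc
      simp at this
      omega

def colHom (n : ℕ) : cycleGraph (n + 3) →g cycleGraph 3 :=
  ⟨colFun n, by
    intro i j h
    rw [cycleGraph_adj'] at h
    rcases h with h | h
    · exact adj3_of_ne _ _ (colFun_ne (eq_add_one_of_sub h)).symm
    · exact adj3_of_ne _ _ (colFun_ne (eq_add_one_of_sub h))⟩

instance finiteHom {n k : ℕ} {β : Type*} [Finite β] (G : SimpleGraph β) :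
    Finite (cycleGraph (n + k) →g G) :=
  Finite.of_injective (fun f => (f : Fin (n + k) → β)) DFunLike.coe_injective

end HomCountAux

open HomCountAux in
/-- For every `m ≥ 3`, the cycle `C_m` admits the same number of graph
homomorphisms into `C₃ ⊔ C₃` and into `C₆` iff `m` is even. -/
theorem hom_count_cycle_two_C3_eq_C6_iff_even (m : ℕ) (hm : 3 ≤ m) :
    Nat.card (cycleGraph m →g (cycleGraph 3 ⊕g cycleGraph 3)) =
      Nat.card (cycleGraph m →g cycleGraph 6) ↔ Even m := by
  obtain ⟨n, rfl⟩ : ∃ n, m = n + 3 := ⟨m - 3, by omega⟩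
  rcases Nat.even_or_odd (n + 3) with he | ho
  · refine ⟨fun _ => he, fun _ => ?_⟩
    have h1 : Nat.card (cycleGraph (n + 3) →g (cycleGraph 3 ⊕g cycleGraph 3)) =
        Nat.card (cycleGraph (n + 3) →g cycleGraph 3) * 2 := by
      rw [Nat.card_congr (sumEquiv (cycleGraph 3)), Nat.card_prod,
        Nat.card_eq_fintype_card (α := Bool), Fintype.card_bool]
    have h2 : Nat.card (cycleGraph (n + 3) →g cycleGraph 6) =
        Nat.card (cycleGraph (n + 3) →g cycleGraph 3) * 2 := by
      rw [Nat.card_congr c6Equiv, Nat.card_prod, Nat.card_congr (top2Equiv he),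
        Nat.card_eq_fintype_card (α := Fin 2), Fintype.card_fin]
    rw [h1, h2]
  · have ho' : ¬ Even (n + 3) := Nat.not_even_iff_odd.mpr ho
    refine ⟨fun h => ?_, fun h => absurd h ho'⟩
    exfalso
    have hE := top2_isEmpty ho'
    have h6 : Nat.card (cycleGraph (n + 3) →g cycleGraph 6) = 0 := by
      haveI : IsEmpty (cycleGraph (n + 3) →g cycleGraph 6) :=
        ⟨fun f => hE.false (hom2.comp f)⟩
      exact Nat.card_of_isEmpty
    haveI : Nonempty (cycleGraph (n + 3) →g (cycleGraph 3 ⊕g cycleGraph 3)) :=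
      ⟨(Embedding.sumInl.toHom).comp (colHom n)⟩
    have hpos : 0 < Nat.card (cycleGraph (n + 3) →g (cycleGraph 3 ⊕g cycleGraph 3)) :=
      Nat.card_pos
    omega
end

section
/- For every m ≥ 3: the number of graph homomorphisms from the cycle C_m to the disjoint union C₄ ⊔ C₄ equals the number of graph homomorphisms from C_m to the cycle C₈ if and only if m is odd. -/
open SimpleGraph

section Aux

/-- projection `C₈ → C₄` -/
def pi84 (x : Fin 8) : Fin 4 := ⟨x.val % 4, by omega⟩

lemma pi84_adj : ∀ x y : Fin 8, (cycleGraph 8).Adj x y →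
    (cycleGraph 4).Adj (pi84 x) (pi84 y) := by decide

lemma uniq_lift : ∀ x y y' : Fin 8, (cycleGraph 8).Adj x y → (cycleGraph 8).Adj x y' →
    pi84 y = pi84 y' → y = y' := by decide

lemma low_eq : ∀ x y : Fin 8, x.val < 4 → y.val < 4 → pi84 x = pi84 y → x = y := by decide

/-- the winding sequence in `C₄` -/
def s4 (k : ℕ) : Fin 4 := if k ≤ 4 then ⟨k % 4, by omega⟩ else if Even k then 0 else 3

/-- the partial lift of `s4` to `C₈` -/
def t8 (k : ℕ) : Fin 8 := if h : k ≤ 4 then ⟨k, by omega⟩ else if Even k then 4 else 3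

lemma t8_zero : t8 0 = 0 := rfl

lemma s4_zero : s4 0 = 0 := rfl

lemma pi84_t8 (k : ℕ) : pi84 (t8 k) = s4 k := by
  unfold pi84 t8 s4
  by_cases h : k ≤ 4
  · simp [h]
  · by_cases h2 : Even k <;> simp [h, h2] <;> rfl

lemma s4_adj (k : ℕ) : (cycleGraph 4).Adj (s4 k) (s4 (k + 1)) := by
  unfold s4
  by_cases h : k ≤ 4
  · interval_cases k <;> decide
  · have h1 : ¬ (k + 1 ≤ 4) := by omega
    by_cases h2 : Even k <;>
      simp [h, h1, h2, Nat.even_add_one] <;> decide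

lemma t8_adj (k : ℕ) : (cycleGraph 8).Adj (t8 k) (t8 (k + 1)) := by
  unfold t8
  by_cases h : k ≤ 4
  · interval_cases k <;> decide
  · have h1 : ¬ (k + 1 ≤ 4) := by omega
    by_cases h2 : Even k <;>
      simp [h, h1, h2, Nat.even_add_one] <;> decide

lemma s4_odd (k : ℕ) (h3 : 3 ≤ k) (hk : Odd k) : s4 k = 3 := by
  unfold s4
  by_cases h : k ≤ 4
  · rw [Nat.odd_iff] at hk
    have : k = 3 := by omega
    subst this; decide
  · simp [h, Nat.not_even_iff_odd.2 hk]

lemma t8_odd (k : ℕ) (h3 : 3 ≤ k) (hk : Odd k) : t8 k = 3 := by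
  unfold t8
  by_cases h : k ≤ 4
  · rw [Nat.odd_iff] at hk
    have : k = 3 := by omega
    subst this; decide
  · simp [h, Nat.not_even_iff_odd.2 hk]

lemma s4_even (k : ℕ) (h4 : 4 ≤ k) (hk : Even k) : s4 k = 0 := by
  unfold s4
  by_cases h : k ≤ 4
  · have : k = 4 := by omega
    subst this; decide
  · simp [h, hk]

lemma fin_succ_eq {n : ℕ} (k : ℕ) (h : k + 1 < n + 3) :
    (⟨k + 1, h⟩ : Fin (n + 3)) = ⟨k, by omega⟩ + 1 := by
  apply Fin.ext
  simp [Fin.add_def, Nat.mod_eq_of_lt h]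

lemma adj_succ {n : ℕ} (v : Fin (n + 3)) : (cycleGraph (n + 3)).Adj v (v + 1) := by
  have : (cycleGraph (n + 1 + 2)).Adj v (v + 1) := by
    rw [cycleGraph_adj]; right; exact add_sub_cancel_left v 1
  exact this

lemma adj_step {n : ℕ} (k : ℕ) (h : k + 1 < n + 3) :
    (cycleGraph (n + 3)).Adj ⟨k, by omega⟩ ⟨k + 1, h⟩ := by
  rw [fin_succ_eq k h]; exact adj_succ _

lemma adj_wrap {n : ℕ} :
    (cycleGraph (n + 3)).Adj ⟨n + 2, by omega⟩ ⟨0, by omega⟩ := by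
  have h0 : ((⟨n + 2, by omega⟩ : Fin (n + 3)) + 1) = ⟨0, by omega⟩ := by
    apply Fin.ext
    simp [Fin.add_def]
  have := adj_succ (n := n) ⟨n + 2, by omega⟩
  rwa [h0] at this

/-- Build a homomorphism from `cycleGraph (n+3)` out of a suitable sequence. -/
def homOfSeq {n : ℕ} {W : Type} {G : SimpleGraph W} (h : ℕ → W)
    (hadj : ∀ k, G.Adj (h k) (h (k + 1))) (hper : h (n + 3) = h 0) :
    cycleGraph (n + 3) →g G where
  toFun v := h v.val
  map_rel' := by
    intro u v huv
    have key : ∀ w : Fin (n + 3), G.Adj (h w.val) (h ((w + 1).val)) := by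
      intro w
      have hv1 : (w + 1).val = (w.val + 1) % (n + 3) := by
        simp [Fin.add_def]
      by_cases hlt : w.val + 1 < n + 3
      · rw [hv1, Nat.mod_eq_of_lt hlt]; exact hadj w.val
      · have hw : w.val = n + 2 := by omega
        have h0 : (w.val + 1) % (n + 3) = 0 := by
          rw [hw]; exact Nat.mod_self (n + 3)
        rw [hv1, h0, ← hper]
        have h3 : n + 3 = w.val + 1 := by omega
        have h4 := hadj w.val
        rwa [← h3] at h4
    have h2 : (cycleGraph (n + 1 + 2)).Adj u v := huv
    rw [cycleGraph_adj] at h2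
    rcases h2 with h2 | h2
    · have : u = v + 1 := by
        rw [sub_eq_iff_eq_add] at h2; rw [h2]; exact add_comm _ _
      subst this
      exact (key v).symm
    · have : v = u + 1 := by
        rw [sub_eq_iff_eq_add] at h2; rw [h2]; exact add_comm _ _
      subst this
      exact key u

end Aux

section OddCase

/-- no hom from an odd cycle to a `Bool`-colorable graph -/
lemma no_hom_of_coloring {n : ℕ} (hodd : Odd (n + 3)) {W : Type} {G : SimpleGraph W}
    (c : G.Coloring Bool) : IsEmpty (cycleGraph (n + 3) →g G) := by
  constructor
  intro f
  have hmpos : 0 < n + 3 := by omega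
  set q : ℕ → Bool := fun k => c (f ⟨k % (n + 3), Nat.mod_lt _ hmpos⟩) with hq
  have hadj : ∀ k, (cycleGraph (n + 3)).Adj ⟨k % (n + 3), Nat.mod_lt _ hmpos⟩
      ⟨(k + 1) % (n + 3), Nat.mod_lt _ hmpos⟩ := by
    intro k
    have h1 : (⟨(k + 1) % (n + 3), Nat.mod_lt _ hmpos⟩ : Fin (n + 3))
        = ⟨k % (n + 3), Nat.mod_lt _ hmpos⟩ + 1 := by
      apply Fin.ext
      simp [Fin.add_def, Nat.mod_add_mod]
    rw [h1]
    exact adj_succ _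
  have hstep : ∀ k, q (k + 1) = ! q k := by
    intro k
    have hne : q k ≠ q (k + 1) := c.valid (f.map_rel (hadj k))
    rcases Bool.eq_false_or_eq_true (q (k + 1)) with h | h <;>
      rcases Bool.eq_false_or_eq_true (q k) with h2 | h2 <;> simp_all [hq]
  have key : ∀ k, q k = xor (decide (Odd k)) (q 0) := by
    intro k
    induction k with
    | zero => simp
    | succ k ih =>
      have hodd1 : Odd (k + 1) ↔ ¬ Odd k := Nat.odd_add_one
      by_cases h : Odd k <;> simp [h, hodd1, hstep k, ih]
  have e : (⟨(n + 3) % (n + 3), Nat.mod_lt _ hmpos⟩ : Fin (n + 3))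
      = ⟨0 % (n + 3), Nat.mod_lt _ hmpos⟩ := by
    apply Fin.ext; simp
  have h1 : q (n + 3) = q 0 := by
    simp only [hq]; rw [e]
  have h2 := key (n + 3)
  rw [h1] at h2
  simp [hodd] at h2

end OddCase

section Colorings

lemma c8_valid : ∀ u v : Fin 8, (cycleGraph 8).Adj u v →
    decide (u.val % 2 = 0) ≠ decide (v.val % 2 = 0) := by decide

def c8 : (cycleGraph 8).Coloring Bool :=
  Coloring.mk (fun v => decide (v.val % 2 = 0)) (fun {u v} h => c8_valid u v h)

lemma c4_valid : ∀ u v : Fin 4, (cycleGraph 4).Adj u v →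
    decide (u.val % 2 = 0) ≠ decide (v.val % 2 = 0) := by decide

def csum : (cycleGraph 4 ⊕g cycleGraph 4).Coloring Bool :=
  Coloring.mk
    (Sum.elim (fun v => decide (v.val % 2 = 0)) (fun v => decide (v.val % 2 = 0)))
    (by
      intro u v h
      cases u <;> cases v <;>
        first
          | exact c4_valid _ _ h
          | (simp [SimpleGraph.sum_adj] at h))

end Colorings

section EvenCase

variable {n : ℕ}

lemma high_eq : ∀ x y : Fin 8, ¬ x.val < 4 → ¬ y.val < 4 → pi84 x = pi84 y → x = y := by decide

/-- compose a hom to `C₈` with the projection into the left copy of `C₄` -/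
def homl (f : cycleGraph (n + 3) →g cycleGraph 8) :
    cycleGraph (n + 3) →g (cycleGraph 4 ⊕g cycleGraph 4) where
  toFun v := Sum.inl (pi84 (f v))
  map_rel' h := pi84_adj _ _ (f.map_rel h)

/-- compose a hom to `C₈` with the projection into the right copy of `C₄` -/
def homr (f : cycleGraph (n + 3) →g cycleGraph 8) :
    cycleGraph (n + 3) →g (cycleGraph 4 ⊕g cycleGraph 4) where
  toFun v := Sum.inr (pi84 (f v))
  map_rel' h := pi84_adj _ _ (f.map_rel h)

/-- the injection of homs to `C₈` into homs to `C₄ ⊔ C₄` -/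
def Phi (f : cycleGraph (n + 3) →g cycleGraph 8) :
    cycleGraph (n + 3) →g (cycleGraph 4 ⊕g cycleGraph 4) :=
  if (f 0).val < 4 then homl f else homr f

lemma hom_ext (f f' : cycleGraph (n + 3) →g cycleGraph 8)
    (h0 : f 0 = f' 0) (hpi : ∀ v, pi84 (f v) = pi84 (f' v)) : f = f' := by
  have key : ∀ k, ∀ hk : k < n + 3, f ⟨k, hk⟩ = f' ⟨k, hk⟩ := by
    intro k
    induction k with
    | zero => intro hk; exact h0
    | succ k ih =>
      intro hk
      have hk' : k < n + 3 := by omega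
      have a1 := f.map_rel (adj_step (n := n) k hk)
      have a2 := f'.map_rel (adj_step (n := n) k hk)
      rw [← ih hk'] at a2
      exact uniq_lift _ _ _ a1 a2 (hpi _)
  exact DFunLike.ext f f' fun v => key v.val v.isLt

lemma Phi_inj : Function.Injective (Phi (n := n)) := by
  intro f f' h
  by_cases h1 : (f 0).val < 4 <;> by_cases h2 : (f' 0).val < 4
  · rw [Phi, Phi, if_pos h1, if_pos h2] at h
    have hpi : ∀ v, pi84 (f v) = pi84 (f' v) := by
      intro v
      have h3 : Sum.inl (pi84 (f v)) = (Sum.inl (pi84 (f' v)) : Fin 4 ⊕ Fin 4) :=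
        DFunLike.congr_fun h v
      exact Sum.inl.inj h3
    exact hom_ext f f' (low_eq _ _ h1 h2 (hpi 0)) hpi
  · rw [Phi, Phi, if_pos h1, if_neg h2] at h
    have h3 : Sum.inl (pi84 (f 0)) = (Sum.inr (pi84 (f' 0)) : Fin 4 ⊕ Fin 4) :=
      DFunLike.congr_fun h 0
    simp at h3
  · rw [Phi, Phi, if_neg h1, if_pos h2] at h
    have h3 : Sum.inr (pi84 (f 0)) = (Sum.inl (pi84 (f' 0)) : Fin 4 ⊕ Fin 4) :=
      DFunLike.congr_fun h 0
    simp at h3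
  · rw [Phi, Phi, if_neg h1, if_neg h2] at h
    have hpi : ∀ v, pi84 (f v) = pi84 (f' v) := by
      intro v
      have h3 : Sum.inr (pi84 (f v)) = (Sum.inr (pi84 (f' v)) : Fin 4 ⊕ Fin 4) :=
        DFunLike.congr_fun h v
      exact Sum.inr.inj h3
    exact hom_ext f f' (high_eq _ _ h1 h2 (hpi 0)) hpi

/-- the hom winding once around the left copy of `C₄` -/
def g0 (he : Even (n + 3)) : cycleGraph (n + 3) →g (cycleGraph 4 ⊕g cycleGraph 4) :=
  homOfSeq (fun k => Sum.inl (s4 k)) (fun k => s4_adj k)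
    (by
      have h1 : s4 (n + 3) = 0 := s4_even (n + 3) (by
        rcases he with ⟨c, hc⟩; omega) he
      show Sum.inl (s4 (n + 3)) = (Sum.inl (s4 0) : Fin 4 ⊕ Fin 4)
      rw [h1, s4_zero])

lemma g0_apply (he : Even (n + 3)) (v : Fin (n + 3)) : g0 he v = Sum.inl (s4 v.val) := rfl

lemma g0_not_mem (he : Even (n + 3)) : g0 he ∉ Set.range (Phi (n := n)) := by
  rintro ⟨f, hf⟩
  by_cases h1 : (f 0).val < 4
  · rw [Phi, if_pos h1] at hf
    have hpi : ∀ v : Fin (n + 3), pi84 (f v) = s4 v.val := by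
      intro v
      have h3 : Sum.inl (pi84 (f v)) = (Sum.inl (s4 v.val) : Fin 4 ⊕ Fin 4) :=
        DFunLike.congr_fun hf v
      exact Sum.inl.inj h3
    have hf0 : f 0 = 0 := by
      apply low_eq _ _ h1 (by decide)
      have := hpi 0
      rw [show ((0 : Fin (n + 3)).val) = 0 from rfl, s4_zero] at this
      rw [this]; decide
    have key : ∀ k, ∀ hk : k < n + 3, f ⟨k, hk⟩ = t8 k := by
      intro k
      induction k with
      | zero => intro hk; rw [t8_zero]; exact hf0
      | succ k ih =>
        intro hk
        have hk' : k < n + 3 := by omega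
        have a1 := f.map_rel (adj_step (n := n) k hk)
        rw [ih hk'] at a1
        refine uniq_lift _ _ _ a1 (t8_adj k) ?_
        rw [pi84_t8]
        exact hpi ⟨k + 1, hk⟩
    have hodd2 : Odd (n + 2) := by
      rcases he with ⟨c, hc⟩
      exact ⟨c - 1, by omega⟩
    have h3 : 3 ≤ n + 2 := by
      rcases hodd2 with ⟨c, hc⟩; omega
    have hlast : f ⟨n + 2, by omega⟩ = 3 := by
      rw [key (n + 2) (by omega)]
      exact t8_odd (n + 2) h3 hodd2
    have hwrap := f.map_rel (adj_wrap (n := n))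
    rw [hlast, show (⟨0, by omega⟩ : Fin (n + 3)) = 0 from rfl, hf0] at hwrap
    exact (by decide : ¬ (cycleGraph 8).Adj 3 0) hwrap
  · rw [Phi, if_neg h1] at hf
    have h3 : Sum.inr (pi84 (f 0)) = (Sum.inl (s4 ((0 : Fin (n + 3)).val)) : Fin 4 ⊕ Fin 4) :=
      DFunLike.congr_fun hf 0
    simp at h3

lemma card_lt (he : Even (n + 3)) :
    Nat.card (cycleGraph (n + 3) →g cycleGraph 8) <
      Nat.card (cycleGraph (n + 3) →g (cycleGraph 4 ⊕g cycleGraph 4)) := by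
  letI : Fintype (cycleGraph (n + 3) →g cycleGraph 8) :=
    Fintype.ofInjective (fun f => (f : Fin (n + 3) → Fin 8)) DFunLike.coe_injective
  letI : Fintype (cycleGraph (n + 3) →g (cycleGraph 4 ⊕g cycleGraph 4)) :=
    Fintype.ofInjective (fun f => (f : Fin (n + 3) → Fin 4 ⊕ Fin 4)) DFunLike.coe_injective
  rw [Nat.card_eq_fintype_card, Nat.card_eq_fintype_card]
  exact Fintype.card_lt_of_injective_of_notMem Phi Phi_inj (g0_not_mem he)

end EvenCase

/-- For every `m ≥ 3`, the cycle `C_m` admits the same number of graph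
homomorphisms into `C₄ ⊔ C₄` and into `C₈` iff `m` is odd. -/
theorem hom_count_cycle_two_C4_eq_C8_iff_odd (m : ℕ) (hm : 3 ≤ m) :
    Nat.card (cycleGraph m →g (cycleGraph 4 ⊕g cycleGraph 4)) =
      Nat.card (cycleGraph m →g cycleGraph 8) ↔ Odd m := by
  obtain ⟨n, rfl⟩ : ∃ n, m = n + 3 := ⟨m - 3, by omega⟩
  rcases Nat.even_or_odd (n + 3) with he | ho
  · exact iff_of_false (card_lt he).ne' (Nat.not_odd_iff_even.mpr he)
  · haveI h1 := no_hom_of_coloring ho csum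
    haveI h2 := no_hom_of_coloring ho c8
    exact iff_of_true (by rw [Nat.card_of_isEmpty, Nat.card_of_isEmpty]) ho
end

section
/- Let G and H be finite simple graphs, and set L = (G × (C₃ ⊔ C₃)) ⊔ (H × C₆) and R = (H × (C₃ ⊔ C₃)) ⊔ (G × C₆). Then [hom(C_m, L) = hom(C_m, R) for all m ≥ 3 and hom(P_m, L) = hom(P_m, R) for all m ≥ 1] if and only if hom(C_m, G) = hom(C_m, H) for all odd m ≥ 3. -/
open SimpleGraph

namespace CFIAux

variable {α β γ : Type*}

open Fin.NatCast Fin.CommRing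

instance homFinite {G : SimpleGraph α} {H : SimpleGraph β} [Finite α] [Finite β] :
    Finite (G →g H) :=
  Finite.of_injective (fun f => (f : α → β)) DFunLike.coe_injective

instance tensorDecidable {G : SimpleGraph α} {H : SimpleGraph β}
    [DecidableRel G.Adj] [DecidableRel H.Adj] : DecidableRel (G.tensorProd H).Adj :=
  fun _ _ => instDecidableAnd

/-- Homs into a tensor product correspond to pairs of homs. -/
def tensorHomEquiv (F : SimpleGraph γ) (G : SimpleGraph α) (H : SimpleGraph β) :
    (F →g G.tensorProd H) ≃ (F →g G) × (F →g H) where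
  toFun f := (⟨fun v => (f v).1, fun h => (f.map_adj h).1⟩,
              ⟨fun v => (f v).2, fun h => (f.map_adj h).2⟩)
  invFun p := ⟨fun v => (p.1 v, p.2 v), fun h => ⟨p.1.map_adj h, p.2.map_adj h⟩⟩
  left_inv f := DFunLike.ext _ _ fun _ => rfl
  right_inv p := rfl

lemma card_tensorHom (F : SimpleGraph γ) (G : SimpleGraph α) (H : SimpleGraph β) :
    Nat.card (F →g G.tensorProd H) = Nat.card (F →g G) * Nat.card (F →g H) :=
  (Nat.card_congr (tensorHomEquiv F G H)).trans (Nat.card_prod _ _)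

/-- Composing with an isomorphism of targets is an equivalence on hom sets. -/
def isoHomEquiv (F : SimpleGraph γ) {G : SimpleGraph α} {H : SimpleGraph β} (e : G ≃g H) :
    (F →g G) ≃ (F →g H) where
  toFun f := e.toHom.comp f
  invFun f := e.symm.toHom.comp f
  left_inv f := DFunLike.ext _ _ fun v => e.symm_apply_apply (f v)
  right_inv f := DFunLike.ext _ _ fun v => e.apply_symm_apply (f v)

lemma walk_isLeft {F : SimpleGraph γ} {A : SimpleGraph α} {B : SimpleGraph β}
    (f : F →g A ⊕g B) {u v : γ} (w : F.Walk u v) (h : (f u).isLeft) : (f v).isLeft := by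
  induction w with
  | nil => exact h
  | @cons u x v hadj p ih =>
    apply ih
    have h2 := f.map_adj hadj
    rcases h1 : f u with a | b
    · rcases h3 : f x with a' | b'
      · rfl
      · rw [h1, h3] at h2; simp at h2
    · rw [h1] at h; simp at h

lemma walk_isRight {F : SimpleGraph γ} {A : SimpleGraph α} {B : SimpleGraph β}
    (f : F →g A ⊕g B) {u v : γ} (w : F.Walk u v) (h : (f u).isRight) : (f v).isRight := by
  induction w with
  | nil => exact h
  | @cons u x v hadj p ih =>
    apply ih
    have h2 := f.map_adj hadj
    rcases h1 : f u with a | b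
    · rw [h1] at h; simp at h
    · rcases h3 : f x with a' | b'
      · rw [h1, h3] at h2; simp at h2
      · rfl

def sumHomFun {F : SimpleGraph γ} {A : SimpleGraph α} {B : SimpleGraph β} :
    (F →g A) ⊕ (F →g B) → (F →g A ⊕g B)
  | .inl g => ⟨fun v => .inl (g v), fun h => g.map_adj h⟩
  | .inr g => ⟨fun v => .inr (g v), fun h => g.map_adj h⟩

lemma sumHom_bij {F : SimpleGraph γ} {A : SimpleGraph α} {B : SimpleGraph β}
    (hc : F.Connected) : Function.Bijective (sumHomFun (F := F) (A := A) (B := B)) := by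
  obtain ⟨v₀⟩ := hc.nonempty
  constructor
  · intro x y hxy
    cases x with
    | inl g => cases y with
      | inl g' =>
        exact congrArg Sum.inl
          (DFunLike.ext _ _ fun v => Sum.inl_injective (DFunLike.congr_fun hxy v))
      | inr g' => exact absurd (DFunLike.congr_fun hxy v₀) Sum.inl_ne_inr
    | inr g => cases y with
      | inl g' => exact absurd (DFunLike.congr_fun hxy v₀) Sum.inr_ne_inl
      | inr g' =>
        exact congrArg Sum.inr
          (DFunLike.ext _ _ fun v => Sum.inr_injective (DFunLike.congr_fun hxy v))
  · intro f
    rcases h0 : f v₀ with a | b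
    · have hv : ∀ v, (f v).isLeft := fun v =>
        walk_isLeft f ((hc v₀ v).some) (by rw [h0]; rfl)
      refine ⟨.inl ⟨fun v => (f v).getLeft (hv v), ?_⟩, ?_⟩
      · intro u w h
        have h2 := f.map_adj h
        rw [← Sum.inl_getLeft (f u) (hv u), ← Sum.inl_getLeft (f w) (hv w)] at h2
        exact h2
      · exact DFunLike.ext _ _ fun v => Sum.inl_getLeft (f v) (hv v)
    · have hv : ∀ v, (f v).isRight := fun v =>
        walk_isRight f ((hc v₀ v).some) (by rw [h0]; rfl)
      refine ⟨.inr ⟨fun v => (f v).getRight (hv v), ?_⟩, ?_⟩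
      · intro u w h
        have h2 := f.map_adj h
        rw [← Sum.inr_getRight (f u) (hv u), ← Sum.inr_getRight (f w) (hv w)] at h2
        exact h2
      · exact DFunLike.ext _ _ fun v => Sum.inr_getRight (f v) (hv v)

lemma card_hom_sum [Finite α] [Finite β] [Finite γ] {F : SimpleGraph γ}
    {A : SimpleGraph α} {B : SimpleGraph β} (hc : F.Connected) :
    Nat.card (F →g A ⊕g B) = Nat.card (F →g A) + Nat.card (F →g B) := by
  rw [← Nat.card_sum, Nat.card_congr (Equiv.ofBijective _ (sumHom_bij hc)).symm]

lemma zmod2_ne_iff : ∀ a b : ZMod 2, a ≠ b ↔ b = a + 1 := by decide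

lemma zmod2_add_one_ne : ∀ a : ZMod 2, a + 1 ≠ a := by decide

lemma natCast_zmod2_of_odd {x : ℕ} (hx : x % 2 = 1) : (x : ZMod 2) = 1 := by
  rw [← ZMod.natCast_mod, hx]; rfl

lemma zmod2_cast_ne {x y : ℕ} (h : x % 2 ≠ y % 2) : (x : ZMod 2) ≠ (y : ZMod 2) := by
  rw [← ZMod.natCast_mod x 2, ← ZMod.natCast_mod y 2]
  rcases Nat.mod_two_eq_zero_or_one x with hx | hx <;>
    rcases Nat.mod_two_eq_zero_or_one y with hy | hy <;>
      rw [hx, hy] <;>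
        first
          | exact absurd (hx.trans hy.symm) h
          | decide

lemma cycle_adj_cases {n : ℕ} {u v : Fin (n + 3)} (h : (cycleGraph (n + 3)).Adj u v) :
    u.val = v.val + 1 ∨ v.val = u.val + 1 ∨ (u.val = 0 ∧ v.val = n + 2) ∨
      (v.val = 0 ∧ u.val = n + 2) := by
  have key : ∀ a b : Fin (n + 3), a = b + 1 →
      a.val = b.val + 1 ∨ (a.val = 0 ∧ b.val = n + 2) := by
    intro a b hab
    have h1 : a.val = (b.val + 1) % (n + 3) := by
      rw [hab, Fin.val_add, Fin.val_one]
    have h2 : b.val < n + 3 := b.isLt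
    rcases Nat.lt_or_ge (b.val + 1) (n + 3) with hlt | hge
    · rw [Nat.mod_eq_of_lt hlt] at h1; omega
    · have hb : b.val = n + 2 := by omega
      rw [hb] at h1
      have h4 : (n + 2 + 1) % (n + 3) = 0 := Nat.mod_self (n + 3)
      omega
  rw [cycleGraph_adj] at h
  rcases h with h | h
  · have := key u v (by rwa [sub_eq_iff_eq_add'] at h)
    omega
  · have := key v u (by rwa [sub_eq_iff_eq_add'] at h)
    omega

lemma cycle_adj_succ {n : ℕ} (v : Fin (n + 3)) : (cycleGraph (n + 3)).Adj (v + 1) v := by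
  rw [cycleGraph_adj]; left; ring

lemma cycle_hom_iter {n : ℕ} (f : cycleGraph (n + 3) →g (⊤ : SimpleGraph (ZMod 2))) :
    ∀ k : ℕ, f (k : Fin (n + 3)) = f 0 + (k : ZMod 2) := by
  intro k
  induction k with
  | zero => simp
  | succ k ih =>
    have h := f.map_adj (cycle_adj_succ (k : Fin (n + 3)))
    rw [top_adj] at h
    have step : f ((k : Fin (n + 3)) + 1) = f (k : Fin (n + 3)) + 1 :=
      (zmod2_ne_iff _ _).mp h.symm
    have hcast : ((k + 1 : ℕ) : Fin (n + 3)) = (k : Fin (n + 3)) + 1 := by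
      push_cast; ring
    rw [hcast, step, ih]; push_cast; ring

lemma card_cycle_K2_odd {n : ℕ} (hodd : Odd (n + 3)) :
    Nat.card (cycleGraph (n + 3) →g (⊤ : SimpleGraph (ZMod 2))) = 0 := by
  have : IsEmpty (cycleGraph (n + 3) →g (⊤ : SimpleGraph (ZMod 2))) := by
    constructor
    intro f
    have h := cycle_hom_iter f (n + 3)
    rw [Fin.natCast_self, natCast_zmod2_of_odd (Nat.odd_iff.mp hodd)] at h
    exact zmod2_add_one_ne (f 0) h.symm
  exact Nat.card_of_isEmpty

def cycleK2Equiv {n : ℕ} (he : 2 ∣ (n + 3)) :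
    (cycleGraph (n + 3) →g (⊤ : SimpleGraph (ZMod 2))) ≃ ZMod 2 where
  toFun f := f 0
  invFun c := ⟨fun v => c + (v.val : ZMod 2), by
    intro u v h
    simp only [top_adj]
    intro hcontra
    have h2 : (u.val : ZMod 2) = (v.val : ZMod 2) := add_left_cancel hcontra
    rcases cycle_adj_cases h with h3 | h3 | ⟨h3, h4⟩ | ⟨h3, h4⟩ <;>
      exact zmod2_cast_ne (by omega) h2⟩
  left_inv f := DFunLike.ext _ _ fun v => by
    show f 0 + (v.val : ZMod 2) = f v
    have h := cycle_hom_iter f v.val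
    rw [Fin.cast_val_eq_self] at h
    rw [h]
  right_inv c := by
    show c + (((0 : Fin (n + 3)).val : ℕ) : ZMod 2) = c
    simp

lemma card_cycle_K2_even {n : ℕ} (he : 2 ∣ (n + 3)) :
    Nat.card (cycleGraph (n + 3) →g (⊤ : SimpleGraph (ZMod 2))) = 2 := by
  rw [Nat.card_congr (cycleK2Equiv he), Nat.card_eq_fintype_card, ZMod.card]

lemma path_hom_iter {n : ℕ} (f : pathGraph (n + 1) →g (⊤ : SimpleGraph (ZMod 2))) :
    ∀ v : Fin (n + 1), f v = f ⟨0, Nat.succ_pos n⟩ + (v.val : ZMod 2) := by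
  rintro ⟨k, hk⟩
  induction k with
  | zero => simp
  | succ k ih =>
    have hk' : k < n + 1 := by omega
    have hadj : (pathGraph (n + 1)).Adj ⟨k, hk'⟩ ⟨k + 1, hk⟩ := by
      rw [pathGraph_adj]; left; rfl
    have h := f.map_adj hadj
    rw [top_adj] at h
    have step : f ⟨k + 1, hk⟩ = f ⟨k, hk'⟩ + 1 := (zmod2_ne_iff _ _).mp h
    rw [step, ih hk']
    push_cast; ring

def pathK2Equiv (n : ℕ) :
    (pathGraph (n + 1) →g (⊤ : SimpleGraph (ZMod 2))) ≃ ZMod 2 where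
  toFun f := f ⟨0, Nat.succ_pos n⟩
  invFun c := ⟨fun v => c + (v.val : ZMod 2), by
    intro u v h
    rw [pathGraph_adj] at h
    simp only [top_adj]
    intro hcontra
    have h2 : (u.val : ZMod 2) = (v.val : ZMod 2) := add_left_cancel hcontra
    rcases h with h | h <;> exact zmod2_cast_ne (by omega) h2⟩
  left_inv f := DFunLike.ext _ _ fun v => by
    show f ⟨0, Nat.succ_pos n⟩ + (v.val : ZMod 2) = f v
    rw [path_hom_iter f v]
  right_inv c := by
    show c + (((0 : ℕ)) : ZMod 2) = c
    simp

lemma card_path_K2 (n : ℕ) :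
    Nat.card (pathGraph (n + 1) →g (⊤ : SimpleGraph (ZMod 2))) = 2 := by
  rw [Nat.card_congr (pathK2Equiv n), Nat.card_eq_fintype_card, ZMod.card]

lemma cycle_hom_C3_nonempty (n : ℕ) : Nonempty (cycleGraph (n + 3) →g cycleGraph 3) := by
  refine ⟨⟨fun v => if v.val = n + 2 then 2 else ⟨v.val % 2, by omega⟩, ?_⟩⟩
  intro u v h
  rw [cycleGraph_three_eq_top, top_adj]
  intro heq
  have hval := congrArg Fin.val heq
  rw [apply_ite Fin.val, apply_ite Fin.val] at hval
  have h2 : ((2 : Fin 3) : ℕ) = 2 := rfl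
  rcases cycle_adj_cases h with h1 | h1 | ⟨h1, h3⟩ | ⟨h1, h3⟩ <;>
    · split_ifs at hval <;> simp only [h2] at hval <;> omega

lemma card_C3_pos (n : ℕ) : 0 < Nat.card (cycleGraph (n + 3) →g cycleGraph 3) := by
  have := cycle_hom_C3_nonempty n
  exact Nat.card_pos

/-- `C₆ ≅ C₃ ⊗ K₂`. -/
noncomputable def c6Iso : cycleGraph 6 ≃g (cycleGraph 3).tensorProd (⊤ : SimpleGraph (ZMod 2)) where
  toEquiv := Equiv.ofBijective
    (fun i => (⟨i.val % 3, Nat.mod_lt _ (by norm_num)⟩, (i.val : ZMod 2)))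
    (by decide)
  map_rel_iff' := by
    intro a b
    revert a b
    decide

lemma count_L [Finite α] [Finite β] [Finite γ]
    (G : SimpleGraph α) (H : SimpleGraph β) {F : SimpleGraph γ} (hc : F.Connected) :
    Nat.card (F →g
        ((G.tensorProd (cycleGraph 3 ⊕g cycleGraph 3)) ⊕g (H.tensorProd (cycleGraph 6)))) =
      Nat.card (F →g G) *
          (Nat.card (F →g cycleGraph 3) + Nat.card (F →g cycleGraph 3)) +
        Nat.card (F →g H) *
          (Nat.card (F →g cycleGraph 3) *
            Nat.card (F →g (⊤ : SimpleGraph (ZMod 2)))) := by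
  rw [card_hom_sum hc]
  congr 1
  · rw [card_tensorHom, card_hom_sum hc]
  · rw [card_tensorHom, Nat.card_congr (isoHomEquiv F c6Iso), card_tensorHom]

end CFIAux

open CFIAux in
theorem homInd_cycles_paths_CFI_iff_odd_cycles
    {VG VH : Type*} [Fintype VG] [Fintype VH]
    (G : SimpleGraph VG) (H : SimpleGraph VH) :
    ((∀ m : ℕ, 3 ≤ m →
        Nat.card (cycleGraph m →g
          ((G.tensorProd (cycleGraph 3 ⊕g cycleGraph 3)) ⊕g (H.tensorProd (cycleGraph 6)))) =
        Nat.card (cycleGraph m →g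
          ((H.tensorProd (cycleGraph 3 ⊕g cycleGraph 3)) ⊕g (G.tensorProd (cycleGraph 6))))) ∧
      (∀ m : ℕ, 1 ≤ m →
        Nat.card (pathGraph m →g
          ((G.tensorProd (cycleGraph 3 ⊕g cycleGraph 3)) ⊕g (H.tensorProd (cycleGraph 6)))) =
        Nat.card (pathGraph m →g
          ((H.tensorProd (cycleGraph 3 ⊕g cycleGraph 3)) ⊕g (G.tensorProd (cycleGraph 6)))))) ↔
      (∀ m : ℕ, 3 ≤ m → Odd m →
        Nat.card (cycleGraph m →g G) = Nat.card (cycleGraph m →g H)) := by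
  constructor
  · rintro ⟨hcyc, -⟩ m h3 hodd
    obtain ⟨n, rfl⟩ : ∃ n, m = n + 3 := ⟨m - 3, by omega⟩
    have hc : (cycleGraph (n + 3)).Connected := cycleGraph_connected
    have h := hcyc (n + 3) h3
    rw [count_L G H hc, count_L H G hc, card_cycle_K2_odd hodd] at h
    simp only [Nat.mul_zero, Nat.add_zero] at h
    have hcpos := card_C3_pos n
    exact Nat.eq_of_mul_eq_mul_right (by omega) h
  · intro hGH
    constructor
    · intro m h3
      obtain ⟨n, rfl⟩ : ∃ n, m = n + 3 := ⟨m - 3, by omega⟩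
      have hc : (cycleGraph (n + 3)).Connected := cycleGraph_connected
      rw [count_L G H hc, count_L H G hc]
      rcases Nat.even_or_odd (n + 3) with he | ho
      · rw [card_cycle_K2_even he.two_dvd]
        ring
      · rw [card_cycle_K2_odd ho, hGH (n + 3) h3 ho]
    · intro m h1
      obtain ⟨n, rfl⟩ : ∃ n, m = n + 1 := ⟨m - 1, by omega⟩
      have hc : (pathGraph (n + 1)).Connected := pathGraph_connected n
      rw [count_L G H hc, count_L H G hc, card_path_K2]
      ring
end

section
/- Let A and B be symmetric n×n matrices over ℝ. Then A and B have the same characteristic polynomial if and only if A and B are similar, i.e. there exists an invertible n×n real matrix P with B = P · A · P⁻¹. -/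
open Polynomial Matrix

private lemma charpoly_conj' {n : ℕ} (P A : Matrix (Fin n) (Fin n) ℝ) (hP : IsUnit P) :
    (P * A * P⁻¹).charpoly = A.charpoly := by
  have hd : IsUnit P.det := (Matrix.isUnit_iff_isUnit_det P).mp hP
  have h1 : P * P⁻¹ = 1 := Matrix.mul_nonsing_inv P hd
  have key : charmatrix (P * A * P⁻¹) =
      matPolyEquiv.symm (C P) * charmatrix A * matPolyEquiv.symm (C P⁻¹) := by
    apply matPolyEquiv.injective
    simp only [_root_.map_mul, AlgEquiv.apply_symm_apply, matPolyEquiv_charmatrix]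
    have hc : (C P : (Matrix (Fin n) (Fin n) ℝ)[X]) * C P⁻¹ = 1 := by
      rw [← _root_.map_mul, h1, _root_.map_one]
    rw [mul_sub, sub_mul, ← (Polynomial.commute_X (C P)).eq, mul_assoc X, hc, mul_one,
      ← _root_.map_mul, ← _root_.map_mul]
  have h2 : matPolyEquiv.symm (C P) * matPolyEquiv.symm (C P⁻¹) = 1 := by
    rw [← _root_.map_mul, ← Polynomial.C_mul, h1, Polynomial.C_1]; exact map_one matPolyEquiv.symm
  have h3 : (matPolyEquiv.symm (C P) : Matrix (Fin n) (Fin n) ℝ[X]).det *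
      (matPolyEquiv.symm (C P⁻¹) : Matrix (Fin n) (Fin n) ℝ[X]).det = 1 := by
    rw [← Matrix.det_mul, h2, Matrix.det_one]
  rw [Matrix.charpoly, Matrix.charpoly, key, Matrix.det_mul, Matrix.det_mul]
  linear_combination (charmatrix A).det * h3

private lemma charpoly_diag' {n : ℕ} (d : Fin n → ℝ) :
    (Matrix.diagonal d).charpoly = ∏ i, (X - C (d i)) := by
  rw [Matrix.charpoly]
  have h : charmatrix (Matrix.diagonal d) = Matrix.diagonal (fun i => X - C (d i)) := by
    ext i j
    by_cases h : i = j
    · subst h; simp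
    · simp [h, Matrix.diagonal_apply_ne _ h]
  rw [h, Matrix.det_diagonal]

private lemma exists_perm' {n : ℕ} (a b : Fin n → ℝ)
    (h : Multiset.map a Finset.univ.val = Multiset.map b Finset.univ.val) :
    ∃ σ : Equiv.Perm (Fin n), b = a ∘ σ := by
  have hperm : (List.ofFn a).Perm (List.ofFn b) := by
    rw [← Multiset.coe_eq_coe, ← Fin.univ_val_map, ← Fin.univ_val_map]
    exact h
  have hp2 : (List.ofFn (a ∘ Tuple.sort a)).Perm (List.ofFn (b ∘ Tuple.sort b)) :=
    ((Tuple.sort a).ofFn_comp_perm a).trans (hperm.trans ((Tuple.sort b).ofFn_comp_perm b).symm)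
  have heq : a ∘ Tuple.sort a = b ∘ Tuple.sort b :=
    List.ofFn_injective (List.Perm.eq_of_sortedLE
      (Tuple.monotone_sort a).sortedLE_ofFn (Tuple.monotone_sort b).sortedLE_ofFn hp2)
  refine ⟨(Tuple.sort b).symm.trans (Tuple.sort a), funext fun j => ?_⟩
  have := congrFun heq ((Tuple.sort b).symm j)
  simpa using this.symm

private lemma diag_perm_similar' {n : ℕ} (d : Fin n → ℝ) (σ : Equiv.Perm (Fin n)) :
    ∃ Q : Matrix (Fin n) (Fin n) ℝ, IsUnit Q ∧
      Matrix.diagonal (d ∘ σ) = Q * Matrix.diagonal d * Q⁻¹ := by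
  set Q : Matrix (Fin n) (Fin n) ℝ := σ.toPEquiv.toMatrix with hQdef
  set Q' : Matrix (Fin n) (Fin n) ℝ := σ.symm.toPEquiv.toMatrix with hQ'def
  have hQQ' : Q * Q' = 1 := by
    rw [hQdef, hQ'def, ← PEquiv.toMatrix_trans, ← Equiv.toPEquiv_trans]
    simp
  have hQ : IsUnit Q := by
    rw [Matrix.isUnit_iff_isUnit_det]
    exact IsUnit.of_mul_eq_one Q'.det (by rw [← Matrix.det_mul, hQQ', Matrix.det_one])
  have hinv : Q⁻¹ = Q' := Matrix.inv_eq_right_inv hQQ'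
  refine ⟨Q, hQ, ?_⟩
  rw [hinv, hQdef, hQ'def, PEquiv.toMatrix_toPEquiv_mul, PEquiv.mul_toMatrix_toPEquiv]
  ext i j
  rcases eq_or_ne i j with rfl | hij
  · simp [Matrix.diagonal_apply_eq]
  · have hσ : σ i ≠ σ j := fun hc => hij (σ.injective hc)
    simp [Matrix.diagonal_apply_ne _ hij, Matrix.diagonal_apply_ne _ hσ]

/-- Two symmetric `n × n` real matrices have the same characteristic
polynomial iff they are similar, i.e. conjugate by an invertible real matrix. -/
theorem symm_charpoly_eq_iff_similar
    {n : ℕ} (A B : Matrix (Fin n) (Fin n) ℝ) (hA : A.IsSymm) (hB : B.IsSymm) :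
    A.charpoly = B.charpoly ↔
      ∃ P : Matrix (Fin n) (Fin n) ℝ, IsUnit P ∧ B = P * A * P⁻¹ := by
  constructor
  · intro h
    have hA' : A.IsHermitian := by
      rwa [Matrix.IsHermitian, Matrix.conjTranspose_eq_transpose_of_trivial]
    have hB' : B.IsHermitian := by
      rwa [Matrix.IsHermitian, Matrix.conjTranspose_eq_transpose_of_trivial]
    set a := hA'.eigenvalues with ha
    set b := hB'.eigenvalues with hb
    set U : Matrix (Fin n) (Fin n) ℝ :=
      (Matrix.IsHermitian.eigenvectorUnitary hA' : Matrix (Fin n) (Fin n) ℝ) with hU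
    set V : Matrix (Fin n) (Fin n) ℝ :=
      (Matrix.IsHermitian.eigenvectorUnitary hB' : Matrix (Fin n) (Fin n) ℝ) with hV
    have hU1 : U * star U = 1 :=
      Matrix.mem_unitaryGroup_iff.mp (Matrix.IsHermitian.eigenvectorUnitary hA').2
    have hU2 : star U * U = 1 :=
      Matrix.mem_unitaryGroup_iff'.mp (Matrix.IsHermitian.eigenvectorUnitary hA').2
    have hV1 : V * star V = 1 :=
      Matrix.mem_unitaryGroup_iff.mp (Matrix.IsHermitian.eigenvectorUnitary hB').2
    have hV2 : star V * V = 1 :=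
      Matrix.mem_unitaryGroup_iff'.mp (Matrix.IsHermitian.eigenvectorUnitary hB').2
    have hUu : IsUnit U := by
      rw [Matrix.isUnit_iff_isUnit_det]
      exact IsUnit.of_mul_eq_one (star U).det (by rw [← Matrix.det_mul, hU1, Matrix.det_one])
    have hVu : IsUnit V := by
      rw [Matrix.isUnit_iff_isUnit_det]
      exact IsUnit.of_mul_eq_one (star V).det (by rw [← Matrix.det_mul, hV1, Matrix.det_one])
    have hsUu : IsUnit (star U) := by
      rw [Matrix.isUnit_iff_isUnit_det]
      exact IsUnit.of_mul_eq_one U.det (by rw [← Matrix.det_mul, hU2, Matrix.det_one])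
    have hUinv : U⁻¹ = star U := Matrix.inv_eq_right_inv hU1
    have hVinv : V⁻¹ = star V := Matrix.inv_eq_right_inv hV1
    have hsUinv : (star U)⁻¹ = U := Matrix.inv_eq_right_inv hU2
    have hUA : A = U * Matrix.diagonal a * star U := by
      have := hA'.spectral_theorem
      simpa [RCLike.ofReal_real_eq_id] using this
    have hVB : B = V * Matrix.diagonal b * star V := by
      have := hB'.spectral_theorem
      simpa [RCLike.ofReal_real_eq_id] using this
    have hDA : star U * A * U = Matrix.diagonal a := by
      have := hA'.conjStarAlgAut_star_eigenvectorUnitary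
      simpa [RCLike.ofReal_real_eq_id, Unitary.coe_star] using this
    have hca : A.charpoly = ∏ i, (X - C (a i)) := by
      conv_lhs => rw [hUA, ← hUinv]
      rw [charpoly_conj' U _ hUu, charpoly_diag']
    have hcb : B.charpoly = ∏ i, (X - C (b i)) := by
      conv_lhs => rw [hVB, ← hVinv]
      rw [charpoly_conj' V _ hVu, charpoly_diag']
    have key : ∀ c : Fin n → ℝ, (∏ i, (X - C (c i))).roots = Multiset.map c Finset.univ.val := by
      intro c
      rw [Finset.prod_eq_multiset_prod]
      rw [show Multiset.map (fun i => X - C (c i)) Finset.univ.val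
          = Multiset.map (fun x => X - C x) (Multiset.map c Finset.univ.val) by
        rw [Multiset.map_map]; rfl]
      exact Polynomial.roots_multiset_prod_X_sub_C _
    have hroots : Multiset.map a Finset.univ.val = Multiset.map b Finset.univ.val := by
      rw [← key a, ← key b, ← hca, ← hcb, h]
    obtain ⟨σ, hσ⟩ := exists_perm' a b hroots
    obtain ⟨Q, hQu, hQeq⟩ := diag_perm_similar' a σ
    refine ⟨V * Q * star U, (hVu.mul hQu).mul hsUu, ?_⟩
    have hPinv : (V * Q * star U)⁻¹ = U * Q⁻¹ * star V := by
      rw [Matrix.mul_inv_rev, Matrix.mul_inv_rev, hsUinv, hVinv, ← mul_assoc]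
    rw [hPinv, hVB, hσ, hQeq, ← hDA]
    simp only [mul_assoc]
  · rintro ⟨P, hP, rfl⟩
    exact (charpoly_conj' P A hP).symm
end
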